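/- arXiv:1803.05797 — 13 statements merged into one kernel-verified Lean document; each statement's English description precedes it below -/
import Mathlib

section
/- The additive group ∏_p ℤ_p (the product over all primes p of the rings of p-adic integers), with distinguished element e = 1 = (1)_p, is an unordered Z-group; that is: ∏_p ℤ_p is torsion-free; for no prime p is 1 p-divisible in ∏_p ℤ_p; and for every a ∈ ∏_p ℤ_p and every integer n > 0 there exist b ∈ ∏_p ℤ_p and k ∈ ℤ with a = n·b + k·1. -/
/-!
`∏_p ℤ_p` is torsion-free as a product of characteristic-zero domains, and `1` is not
`p`-divisible because `p` is not a unit in `ℤ_p`. For the last property it suffices, by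
multiplicativity, to treat a prime modulus `p`: take `k` to be the residue of the `p`-th
coordinate of `a` modulo `p`; then `a - k` is divisible by `p` in `ℤ_p`, and also in every
`ℤ_q` with `q ≠ p`, where `p` is a unit.
-/

instance (p : Nat.Primes) : Fact (p : ℕ).Prime := ⟨p.2⟩

/-- The profinite completion of `ℤ`, realized as the product of the rings of
`p`-adic integers over all primes `p`. -/
abbrev Zhat : Type := ∀ p : Nat.Primes, ℤ_[(p : ℕ)]

section
variable {G : Type*} [AddCommGroup G]

def GeneratesModulo (e : G) (n : ℤ) : Prop :=
  ∀ g : G, ∃ h : G, ∃ k : ℤ, g = n • h + k • e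

variable {e : G}

theorem generatesModulo_one : GeneratesModulo e 1 :=
  fun g => ⟨g, 0, by simp⟩

theorem GeneratesModulo.mul {m n : ℤ} (hm : GeneratesModulo e m) (hn : GeneratesModulo e n) :
    GeneratesModulo e (m * n) := by
  intro g
  obtain ⟨h, k, rfl⟩ := hm g
  obtain ⟨h', k', rfl⟩ := hn h
  exact ⟨h', m * k' + k, by module⟩

theorem generatesModulo_of_forall_prime (he : ∀ p : ℕ, p.Prime → GeneratesModulo e p)
    {n : ℕ} (hn : n ≠ 0) : GeneratesModulo e n := by
  induction n using Nat.recOnMul with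
  | zero => exact absurd rfl hn
  | one => simpa using generatesModulo_one
  | prime p hp => exact he p hp
  | mul m n hm hn' =>
    simp only [ne_eq, mul_eq_zero, not_or] at hn
    simpa using (hm hn.1).mul (hn' hn.2)
end

namespace PadicInt
variable {p : ℕ} [Fact p.Prime]

theorem dvd_sub_zmodRepr (x : ℤ_[p]) : (p : ℤ_[p]) ∣ x - x.zmodRepr := by
  simpa [maximalIdeal_eq_span_p, Ideal.mem_span_singleton] using sub_zmodRepr_mem x

theorem isUnit_natCast_of_ne {q : ℕ} (hq : q.Prime) (hqp : q ≠ p) : IsUnit (q : ℤ_[p]) := by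
  rw [isUnit_iff, norm_natCast_eq_one_iff, Nat.coprime_primes Fact.out hq]
  exact hqp.symm
end PadicInt

theorem zhat_generatesModulo_prime (p : Nat.Primes) : GeneratesModulo (1 : Zhat) (p : ℕ) := by
  intro a
  let k : ℕ := (a p).zmodRepr
  have hdvd : ∀ q : Nat.Primes, ((p : ℕ) : ℤ_[(q : ℕ)]) ∣ a q - k := by
    intro q
    rcases eq_or_ne q p with rfl | hq
    · exact PadicInt.dvd_sub_zmodRepr _
    · exact (PadicInt.isUnit_natCast_of_ne p.2 fun h => hq (Subtype.ext h.symm)).dvd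
  choose b hb using hdvd
  refine ⟨b, k, funext fun q => ?_⟩
  simp [← hb q]

theorem zhat_one_ne_zsmul (p : Nat.Primes) (b : Zhat) : (1 : Zhat) ≠ ((p : ℕ) : ℤ) • b := by
  intro hb
  have h := congrFun hb p
  simp only [Pi.one_apply, Pi.smul_apply, zsmul_eq_mul, Int.cast_natCast] at h
  exact PadicInt.p_nonunit (.of_mul_eq_one _ h.symm)

/-- `∏_p ℤ_p` with distinguished element `1 = (1)_p` is an unordered Z-group:
it is torsion-free, `1` is not `p`-divisible for any prime `p`, and every element
is congruent to an integer multiple of `1` modulo `n`, for every integer `n > 0`. -/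
theorem zhat_unordered_zgroup :
    (∀ (n : ℤ) (a : Zhat), n ≠ 0 → n • a = 0 → a = 0) ∧
    (∀ p : ℕ, p.Prime → ¬ ∃ b : Zhat, (1 : Zhat) = (p : ℤ) • b) ∧
    (∀ a : Zhat, ∀ n : ℤ, 0 < n → ∃ b : Zhat, ∃ k : ℤ, a = n • b + k • (1 : Zhat)) := by
  refine ⟨fun n a hn h => (smul_eq_zero.mp h).resolve_left hn,
    fun p hp ⟨b, hb⟩ => zhat_one_ne_zsmul ⟨p, hp⟩ b hb, fun a n hn => ?_⟩
  lift n to ℕ using hn.le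
  exact generatesModulo_of_forall_prime (fun p hp => zhat_generatesModulo_prime ⟨p, hp⟩)
    (by omega) a
end

section
/- For every unordered Z-group (G, e) there exists exactly one additive group homomorphism res : G → ∏_p ℤ_p with res(e) = 1 (where 1 = (1)_p). -/
/-!
Every `g` can be written as `g = n • h + k • e`, and the class of `k` modulo `n` depends only
on `g`: if `m • e ∈ nG` then `n ∣ m`, which is proved prime by prime, using that `e` is not
`p`-divisible and cancelling `p` by torsion-freeness. This gives a homomorphism `G → ℤ/n` with
`e ↦ 1`, unique because `G = nG + ℤe`. For `n = p ^ k` these maps are compatible by uniqueness,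
so they lift to `G → ℤ_p`, and a map to `ℤ_p` is determined by its reductions modulo all `p ^ k`.
-/

namespace PadicInt

variable {p : ℕ} [Fact p.Prime] {G : Type*} [AddCommGroup G] {f : ∀ k, G →+ ZMod (p ^ k)}

theorem pow_dvd_val_succ_sub_val
    (hf : ∀ k, (ZMod.castHom (pow_dvd_pow p k.le_succ) _).toAddMonoidHom.comp (f (k + 1)) = f k)
    (g : G) (k : ℕ) : (p : ℤ) ^ k ∣ ((f (k + 1) g).val : ℤ) - (f k g).val := by
  rw [← Nat.cast_pow, ← ZMod.intCast_eq_intCast_iff_dvd_sub, Int.cast_natCast, Int.cast_natCast,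
    ZMod.natCast_zmod_val, ZMod.natCast_val]
  exact (DFunLike.congr_fun (hf k) g).symm

theorem exists_addMonoidHom_toZModPow_apply_eq
    (hf : ∀ k, (ZMod.castHom (pow_dvd_pow p k.le_succ) _).toAddMonoidHom.comp (f (k + 1)) = f k) :
    ∃ F : G →+ ℤ_[p], ∀ k g, toZModPow k (F g) = f k g := by
  let F (g : G) : ℤ_[p] := ofIntSeq _
    (isCauSeq_padicNorm_of_pow_dvd_sub (fun k => ((f k g).val : ℤ)) p
      (pow_dvd_val_succ_sub_val hf g))
  have hF (k : ℕ) (g : G) : toZModPow k (F g) = f k g := by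
    rw [toZModPow_ofIntSeq_of_pow_dvd_sub _ _ (pow_dvd_val_succ_sub_val hf g), Int.cast_natCast,
      ZMod.natCast_zmod_val]
  refine ⟨AddMonoidHom.mk' F fun g g' => ext_of_toZModPow.mp fun k => ?_, hF⟩
  rw [map_add, hF, hF, hF, map_add]

end PadicInt

section UnorderedZGroup

variable {G : Type*} [AddCommGroup G] {e : G}

theorem Nat.Prime.natCast_dvd_of_zsmul_eq_zsmul
    (hnd : ∀ p : ℕ, p.Prime → ¬ ∃ h : G, e = (p : ℤ) • h)
    {p : ℕ} (hp : p.Prime) {m : ℤ} {h : G} (hmh : m • e = (p : ℤ) • h) : (p : ℤ) ∣ m := by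
  by_contra hpm
  obtain ⟨a, b, hab⟩ := ((Nat.prime_iff_prime_int.mp hp).coprime_iff_not_dvd).mpr hpm
  refine hnd p hp ⟨a • e + b • h, ?_⟩
  calc e = (a * p + b * m) • e := by rw [hab, one_smul]
    _ = (p : ℤ) • (a • e + b • h) := by
      rw [add_smul, mul_smul, mul_smul, hmh, smul_add, smul_comm a, smul_comm b]

theorem natCast_dvd_of_zsmul_eq_zsmul (htf : ∀ (n : ℤ) (g : G), n ≠ 0 → n • g = 0 → g = 0)
    (hnd : ∀ p : ℕ, p.Prime → ¬ ∃ h : G, e = (p : ℤ) • h)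
    {n : ℕ} (hn : n ≠ 0) {m : ℤ} {h : G} (hmh : m • e = (n : ℤ) • h) : (n : ℤ) ∣ m := by
  induction n using induction_on_primes generalizing m h with
  | zero => exact absurd rfl hn
  | one => exact Int.one_dvd m
  | prime_mul p a hp ih =>
    push_cast at hmh ⊢
    obtain ⟨m', rfl⟩ := hp.natCast_dvd_of_zsmul_eq_zsmul hnd (hmh.trans (mul_smul _ _ _))
    have hcancel : m' • e = (a : ℤ) • h := by
      refine sub_eq_zero.mp (htf p _ (by exact_mod_cast hp.ne_zero) ?_)
      rw [smul_sub, ← mul_smul, ← mul_smul, hmh, sub_self]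
    exact mul_dvd_mul_left _ (ih (right_ne_zero_of_mul hn) hcancel)

theorem intCast_eq_of_zsmul_add_zsmul_eq (htf : ∀ (n : ℤ) (g : G), n ≠ 0 → n • g = 0 → g = 0)
    (hnd : ∀ p : ℕ, p.Prime → ¬ ∃ h : G, e = (p : ℤ) • h)
    {n : ℕ} (hn : n ≠ 0) {h h' : G} {k k' : ℤ}
    (hkk' : (n : ℤ) • h + k • e = (n : ℤ) • h' + k' • e) : (k : ZMod n) = k' := by
  refine (ZMod.intCast_eq_intCast_iff_dvd_sub _ _ _).mpr
    (natCast_dvd_of_zsmul_eq_zsmul htf hnd hn (h := h - h') ?_)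
  rw [sub_smul, smul_sub, sub_eq_sub_iff_add_eq_add, add_comm, ← hkk', add_comm]

theorem exists_zmodHom_map_eq_one (htf : ∀ (n : ℤ) (g : G), n ≠ 0 → n • g = 0 → g = 0)
    (hnd : ∀ p : ℕ, p.Prime → ¬ ∃ h : G, e = (p : ℤ) • h)
    (hdiv : ∀ g : G, ∀ n : ℤ, 0 < n → ∃ h : G, ∃ k : ℤ, g = n • h + k • e)
    (n : ℕ) [NeZero n] : ∃ f : G →+ ZMod n, f e = 1 := by
  choose h k hhk using fun g => hdiv g n (by exact_mod_cast Nat.pos_of_neZero n)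
  have hk {g h' : G} {k' : ℤ} (hg : g = (n : ℤ) • h' + k' • e) : (k g : ZMod n) = k' :=
    intCast_eq_of_zsmul_add_zsmul_eq htf hnd (NeZero.ne n) ((hhk g).symm.trans hg)
  refine ⟨AddMonoidHom.mk' (fun g => k g) fun g g' => ?_, ?_⟩
  · have hsum : g + g' = (n : ℤ) • (h g + h g') + (k g + k g') • e := by
      conv_lhs => rw [hhk g, hhk g']
      rw [smul_add, add_smul]
      abel
    exact (hk hsum).trans (Int.cast_add _ _)
  · exact (hk (h' := 0) (k' := 1) (by simp)).trans Int.cast_one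

theorem zmodHom_ext_of_map_eq_one
    (hdiv : ∀ g : G, ∀ n : ℤ, 0 < n → ∃ h : G, ∃ k : ℤ, g = n • h + k • e)
    {n : ℕ} [NeZero n] {f f' : G →+ ZMod n} (hf : f e = 1) (hf' : f' e = 1) : f = f' := by
  ext g
  obtain ⟨h, k, rfl⟩ := hdiv g n (by exact_mod_cast Nat.pos_of_neZero n)
  simp [hf, hf']

theorem exists_padicIntHom_map_eq_one (htf : ∀ (n : ℤ) (g : G), n ≠ 0 → n • g = 0 → g = 0)
    (hnd : ∀ p : ℕ, p.Prime → ¬ ∃ h : G, e = (p : ℤ) • h)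
    (hdiv : ∀ g : G, ∀ n : ℤ, 0 < n → ∃ h : G, ∃ k : ℤ, g = n • h + k • e)
    (p : ℕ) [Fact p.Prime] : ∃ f : G →+ ℤ_[p], f e = 1 := by
  choose f hf using fun k => exists_zmodHom_map_eq_one htf hnd hdiv (p ^ k)
  have hcompat (k : ℕ) :
      (ZMod.castHom (pow_dvd_pow p k.le_succ) _).toAddMonoidHom.comp (f (k + 1)) = f k := by
    refine zmodHom_ext_of_map_eq_one hdiv ?_ (hf k)
    rw [AddMonoidHom.comp_apply, hf]
    exact (ZMod.castHom (pow_dvd_pow p k.le_succ) _).map_one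
  obtain ⟨F, hF⟩ := PadicInt.exists_addMonoidHom_toZModPow_apply_eq hcompat
  exact ⟨F, PadicInt.ext_of_toZModPow.mp fun k => by rw [hF, hf, map_one]⟩

theorem padicIntHom_ext_of_map_eq_one
    (hdiv : ∀ g : G, ∀ n : ℤ, 0 < n → ∃ h : G, ∃ k : ℤ, g = n • h + k • e)
    {p : ℕ} [Fact p.Prime] {f f' : G →+ ℤ_[p]} (hf : f e = 1) (hf' : f' e = 1) : f = f' := by
  ext g
  refine PadicInt.ext_of_toZModPow.mp fun k => DFunLike.congr_fun (zmodHom_ext_of_map_eq_one hdiv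
    (f := (PadicInt.toZModPow k).toAddMonoidHom.comp f)
    (f' := (PadicInt.toZModPow k).toAddMonoidHom.comp f') ?_ ?_) g <;> simp [hf, hf']

end UnorderedZGroup

theorem residue_map_exists_unique_general (G : Type) [AddCommGroup G] (e : G)
    (htf : ∀ (n : ℤ) (g : G), n ≠ 0 → n • g = 0 → g = 0)
    (hnd : ∀ p : ℕ, p.Prime → ¬ ∃ h : G, e = (p : ℤ) • h)
    (hdiv : ∀ g : G, ∀ n : ℤ, 0 < n → ∃ h : G, ∃ k : ℤ, g = n • h + k • e) :
    ∃! res : G →+ Zhat, res e = 1 := by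
  choose res hres using fun p : Nat.Primes => exists_padicIntHom_map_eq_one htf hnd hdiv p
  refine ⟨AddMonoidHom.pi res, funext hres, fun f hf => ?_⟩
  ext g p
  exact DFunLike.congr_fun (padicIntHom_ext_of_map_eq_one hdiv
    (f := (Pi.evalAddMonoidHom _ p).comp f) (congr_fun hf p) (hres p)) g

/-- For every unordered Z-group `(G, e)` there is exactly one additive group
homomorphism `res : G → ∏_p ℤ_p` with `res e = 1`. -/
theorem residue_map_exists_unique (G : Type) [AddCommGroup G] (e : G)
    (htf : ∀ (n : ℤ) (g : G), n ≠ 0 → n • g = 0 → g = 0)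
    (hne : e ≠ 0)
    (hnd : ∀ p : ℕ, p.Prime → ¬ ∃ h : G, e = (p : ℤ) • h)
    (hdiv : ∀ g : G, ∀ n : ℤ, 0 < n → ∃ h : G, ∃ k : ℤ, g = n • h + k • e) :
    ∃! res : G →+ Zhat, res e = 1 :=
  residue_map_exists_unique_general G e htf hnd hdiv
end

section
/- Let (G, e) be an unordered Z-group satisfying ⋂_{n>0} nG = {0}. Then there exists an injective additive group homomorphism φ : G → ∏_p ℤ_p with φ(e) = 1 whose image is a pure subgroup of ∏_p ℤ_p. -/
theorem ZMod.eq_zero_iff_forall_prime_pow {n : ℕ} [NeZero n] (a : ZMod n) :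
    a = 0 ↔ ∀ p k : ℕ, p.Prime → p ^ k ∣ n → (a.cast : ZMod (p ^ k)) = 0 := by
  simp only [ZMod.cast_eq_val, ZMod.natCast_eq_zero_iff]
  rw [← Nat.dvd_iff_prime_pow_dvd_dvd, ← ZMod.natCast_eq_zero_iff, ZMod.natCast_zmod_val]

namespace PadicInt

variable {p : ℕ} [Fact p.Prime]

theorem pow_dvd_val_succ_sub_val_s2 {a : ∀ i, ZMod (p ^ i)}
    (ha : ∀ i, ((a (i + 1)).cast : ZMod (p ^ i)) = a i) (i : ℕ) :
    (p : ℤ) ^ i ∣ ((a (i + 1)).val : ℤ) - (a i).val := by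
  rw [← Nat.cast_pow, ← ZMod.intCast_eq_intCast_iff_dvd_sub, Int.cast_natCast, Int.cast_natCast,
    ZMod.natCast_zmod_val, ZMod.natCast_val, ha]

noncomputable def ofZModPow (a : ∀ i, ZMod (p ^ i))
    (ha : ∀ i, ((a (i + 1)).cast : ZMod (p ^ i)) = a i) : ℤ_[p] :=
  ofIntSeq _ <|
    isCauSeq_padicNorm_of_pow_dvd_sub (fun i ↦ ((a i).val : ℤ)) p (pow_dvd_val_succ_sub_val_s2 ha)

theorem toZModPow_ofZModPow (a : ∀ i, ZMod (p ^ i))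
    (ha : ∀ i, ((a (i + 1)).cast : ZMod (p ^ i)) = a i) (i : ℕ) :
    toZModPow i (ofZModPow a ha) = a i := by
  rw [ofZModPow,
    toZModPow_ofIntSeq_of_pow_dvd_sub (fun i ↦ ((a i).val : ℤ)) p (pow_dvd_val_succ_sub_val_s2 ha),
    Int.cast_natCast, ZMod.natCast_zmod_val]

noncomputable def liftAddHom {M : Type*} [AddZeroClass M] (f : ∀ i, M →+ ZMod (p ^ i))
    (hf : ∀ i m, ((f (i + 1) m).cast : ZMod (p ^ i)) = f i m) : M →+ ℤ_[p] where
  toFun m := ofZModPow (f · m) fun i ↦ hf i m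
  map_zero' := ext_of_toZModPow.mp fun i ↦ by simp only [toZModPow_ofZModPow, map_zero]
  map_add' m m' := ext_of_toZModPow.mp fun i ↦ by simp only [toZModPow_ofZModPow, map_add]

theorem toZModPow_liftAddHom {M : Type*} [AddZeroClass M] (f : ∀ i, M →+ ZMod (p ^ i))
    (hf : ∀ i m, ((f (i + 1) m).cast : ZMod (p ^ i)) = f i m) (i : ℕ) (m : M) :
    toZModPow i (liftAddHom f hf m) = f i m :=
  toZModPow_ofZModPow (f · m) (fun i ↦ hf i m) i

end PadicInt

section UnorderedZGroup

variable {G : Type*} [AddCommGroup G] {e : G}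

theorem isUnit_of_eq_zsmul (hnd : ∀ p : ℕ, p.Prime → ¬ ∃ h : G, e = (p : ℤ) • h)
    {n : ℤ} {x : G} (h : e = n • x) : IsUnit n := by
  by_contra hn
  obtain ⟨p, hp, hpn⟩ := Nat.exists_prime_and_dvd (mt Int.isUnit_iff_natAbs_eq.mpr hn)
  obtain ⟨t, rfl⟩ := Int.natCast_dvd.mpr hpn
  exact hnd p hp ⟨t • x, by rw [h, mul_smul]⟩

theorem dvd_of_zsmul_eq_zsmul [IsAddTorsionFree G]
    (hnd : ∀ p : ℕ, p.Prime → ¬ ∃ h : G, e = (p : ℤ) • h)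
    {m n : ℤ} (hn : n ≠ 0) {x : G} (h : m • e = n • x) : n ∣ m := by
  obtain ⟨d, m, n, hd, hmn, rfl, rfl⟩ := Int.exists_gcd_one' (Int.gcd_pos_of_ne_zero_right m hn)
  have h' : m • e = n • x := by
    refine zsmul_right_injective (Int.natCast_ne_zero.mpr hd.ne') ?_
    simpa only [smul_smul, mul_comm] using h
  -- Bézout makes `e` divisible by `n`, which therefore is a unit.
  obtain ⟨a, b, hab⟩ := Int.isCoprime_iff_gcd_eq_one.mpr hmn
  have he : e = n • (a • x + b • e) := by
    calc e = (a * m + b * n) • e := by rw [hab, one_smul]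
      _ = n • (a • x + b • e) := by
        rw [add_smul, mul_smul, h', smul_add, smul_comm n a, mul_comm, mul_smul]
  exact mul_dvd_mul_right ((isUnit_of_eq_zsmul hnd he).dvd) _

open Classical in
/-- The class of `k` modulo `n` for any decomposition `g = n • x + k • e`; under the hypotheses of
`residue_eq` it does not depend on the decomposition. It is `0` when there is none. -/
noncomputable def residue (e : G) (n : ℕ) (g : G) : ZMod n :=
  if h : ∃ k : ℤ, ∃ x : G, g = (n : ℤ) • x + k • e then h.choose else 0

variable [IsAddTorsionFree G] {n : ℕ} [NeZero n]

theorem residue_eq (hnd : ∀ p : ℕ, p.Prime → ¬ ∃ h : G, e = (p : ℤ) • h) {g x : G} {k : ℤ}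
    (h : g = (n : ℤ) • x + k • e) : residue e n g = k := by
  have hex : ∃ k : ℤ, ∃ x : G, g = (n : ℤ) • x + k • e := ⟨k, x, h⟩
  obtain ⟨x', hx'⟩ := hex.choose_spec
  rw [residue, dif_pos hex, ZMod.intCast_eq_intCast_iff_dvd_sub]
  refine dvd_of_zsmul_eq_zsmul hnd (Nat.cast_ne_zero.mpr (NeZero.ne n)) (x := x' - x) ?_
  rw [sub_smul, smul_sub, sub_eq_sub_iff_add_eq_add, add_comm, ← h]
  exact hx'

section Residue

variable (hnd : ∀ p : ℕ, p.Prime → ¬ ∃ h : G, e = (p : ℤ) • h)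
  (hdiv : ∀ g : G, ∀ n : ℤ, 0 < n → ∃ h : G, ∃ k : ℤ, g = n • h + k • e)
include hnd hdiv

noncomputable def residueHom (n : ℕ) [NeZero n] : G →+ ZMod n where
  toFun := residue e n
  map_zero' := by
    rw [residue_eq hnd (x := 0) (k := 0) (by rw [zero_smul, smul_zero, add_zero]), Int.cast_zero]
  map_add' g g' := by
    obtain ⟨x, k, hg⟩ := hdiv g n (Nat.cast_pos.mpr (NeZero.pos n))
    obtain ⟨x', k', hg'⟩ := hdiv g' n (Nat.cast_pos.mpr (NeZero.pos n))
    have hsum : g + g' = (n : ℤ) • (x + x') + (k + k') • e := by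
      rw [hg, hg', smul_add, add_smul]; abel
    rw [residue_eq hnd hg, residue_eq hnd hg', residue_eq hnd hsum, Int.cast_add]

theorem cast_residue {m : ℕ} [NeZero m] (hmn : m ∣ n) (g : G) :
    ((residue e n g).cast : ZMod m) = residue e m g := by
  obtain ⟨x, k, hg⟩ := hdiv g n (Nat.cast_pos.mpr (NeZero.pos n))
  obtain ⟨c, rfl⟩ := hmn
  rw [residue_eq hnd hg, ZMod.cast_intCast (dvd_mul_right m c),
    residue_eq hnd (x := (c : ℤ) • x) (k := k) (by rw [hg, smul_smul, Nat.cast_mul])]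

theorem residue_eq_zero_iff {g : G} : residue e n g = 0 ↔ ∃ x, g = (n : ℤ) • x := by
  constructor
  · intro h
    obtain ⟨x, k, hg⟩ := hdiv g n (Nat.cast_pos.mpr (NeZero.pos n))
    obtain ⟨t, rfl⟩ := (ZMod.intCast_zmod_eq_zero_iff_dvd k n).mp (residue_eq hnd hg ▸ h)
    exact ⟨x + t • e, by rw [hg, smul_add, mul_smul]⟩
  · rintro ⟨x, hx⟩
    exact (residue_eq hnd (g := g) (x := x) (k := 0) (by rw [hx, zero_smul, add_zero])).trans
      Int.cast_zero

noncomputable def padicResidue (p : ℕ) [Fact p.Prime] : G →+ ℤ_[p] :=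
  PadicInt.liftAddHom (fun i ↦ residueHom hnd hdiv (p ^ i))
    fun i ↦ cast_residue hnd hdiv (pow_dvd_pow p i.le_succ)

noncomputable def toZhat : G →+ Zhat :=
  AddMonoidHom.pi fun p ↦ padicResidue hnd hdiv p

theorem toZModPow_toZhat (g : G) (p : Nat.Primes) (i : ℕ) :
    PadicInt.toZModPow i (toZhat hnd hdiv g p) = residue e (p ^ i) g :=
  PadicInt.toZModPow_liftAddHom _ (fun i ↦ cast_residue hnd hdiv (pow_dvd_pow _ i.le_succ)) i g

theorem toZhat_self : toZhat hnd hdiv e = 1 := by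
  funext p
  refine PadicInt.ext_of_toZModPow.mp fun i ↦ ?_
  rw [toZModPow_toZhat, Pi.one_apply, map_one,
    residue_eq hnd (x := 0) (k := 1) (by rw [smul_zero, zero_add, one_smul]), Int.cast_one]

theorem exists_eq_zsmul_iff_toZModPow_toZhat_eq_zero {g : G} :
    (∃ x, g = (n : ℤ) • x) ↔
      ∀ (p : Nat.Primes) (k : ℕ), (p : ℕ) ^ k ∣ n →
        PadicInt.toZModPow k (toZhat hnd hdiv g p) = 0 := by
  simp only [toZModPow_toZhat]
  rw [← residue_eq_zero_iff hnd hdiv, ZMod.eq_zero_iff_forall_prime_pow]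
  constructor
  · intro h p k hk
    rw [← cast_residue hnd hdiv hk, h p k p.2 hk]
  · intro h p k hp hk
    have : Fact p.Prime := ⟨hp⟩
    rw [cast_residue hnd hdiv hk, h ⟨p, hp⟩ k hk]

end Residue

end UnorderedZGroup

theorem leibnizian_embeds_pure_general (G : Type) [AddCommGroup G] (e : G)
    (htf : ∀ (n : ℤ) (g : G), n ≠ 0 → n • g = 0 → g = 0)
    (hnd : ∀ p : ℕ, p.Prime → ¬ ∃ h : G, e = (p : ℤ) • h)
    (hdiv : ∀ g : G, ∀ n : ℤ, 0 < n → ∃ h : G, ∃ k : ℤ, g = n • h + k • e)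
    (hleib : ∀ g : G, (∀ n : ℤ, 0 < n → ∃ h : G, g = n • h) → g = 0) :
    ∃ φ : G →+ Zhat, Function.Injective φ ∧ φ e = 1 ∧
      (∀ (n : ℤ) (b : Zhat), 0 < n → n • b ∈ Set.range φ → b ∈ Set.range φ) := by
  have : IsAddTorsionFree G := ⟨fun n hn a b hab ↦ sub_eq_zero.mp <|
    htf n _ (Int.natCast_ne_zero.mpr hn) <| by
      rw [smul_sub, natCast_zsmul, natCast_zsmul, sub_eq_zero]; exact hab⟩
  refine ⟨toZhat hnd hdiv, (injective_iff_map_eq_zero _).mpr fun g hg ↦ hleib g fun n hn ↦ ?_,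
    toZhat_self hnd hdiv, fun n b hn ⟨g, hg⟩ ↦ ?_⟩
  · lift n to ℕ using hn.le
    have : NeZero n := ⟨by omega⟩
    exact (exists_eq_zsmul_iff_toZModPow_toZhat_eq_zero hnd hdiv (n := n)).mpr fun p k _ ↦ by
      rw [hg, Pi.zero_apply, map_zero]
  · lift n to ℕ using hn.le
    have : NeZero n := ⟨by omega⟩
    obtain ⟨x, rfl⟩ := (exists_eq_zsmul_iff_toZModPow_toZhat_eq_zero hnd hdiv (n := n)).mpr
      fun p k hk ↦ by
        rw [hg, Pi.smul_apply, map_zsmul, natCast_zsmul, nsmul_eq_mul,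
          (ZMod.natCast_eq_zero_iff _ _).mpr hk, zero_mul]
    exact ⟨x, zsmul_right_injective hn.ne' ((map_zsmul _ _ _).symm.trans hg)⟩

/-- A Leibnizian unordered Z-group embeds into `∏_p ℤ_p` as a pure subgroup,
by an embedding sending `e` to `1`. -/
theorem leibnizian_embeds_pure (G : Type) [AddCommGroup G] (e : G)
    (htf : ∀ (n : ℤ) (g : G), n ≠ 0 → n • g = 0 → g = 0)
    (hne : e ≠ 0)
    (hnd : ∀ p : ℕ, p.Prime → ¬ ∃ h : G, e = (p : ℤ) • h)
    (hdiv : ∀ g : G, ∀ n : ℤ, 0 < n → ∃ h : G, ∃ k : ℤ, g = n • h + k • e)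
    (hleib : ∀ g : G, (∀ n : ℤ, 0 < n → ∃ h : G, g = n • h) → g = 0) :
    ∃ φ : G →+ Zhat, Function.Injective φ ∧ φ e = 1 ∧
      (∀ (n : ℤ) (b : Zhat), 0 < n → n • b ∈ Set.range φ → b ∈ Set.range φ) :=
  leibnizian_embeds_pure_general G e htf hnd hdiv hleib
end

section
/- Let H and K be pure additive subgroups of ∏_p ℤ_p, each containing the element 1 = (1)_p. If there exists a group isomorphism φ : H → K with φ(1) = 1, then H = K. -/
/-!
Let `f : H →+ Ẑ` fix `1`, where `H` is pure and contains `1`. Given `x ∈ H`, a prime `p` and `k`,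
write `x = r + p ^ k b` with `r ∈ ℤ` (possible since `p` is a unit in `ℤ_q` for `q ≠ p`);
purity puts `b` in `H`, so `f x - x = p ^ k (f b - b)`. Thus the `p`-component of `f x - x` is
divisible by every power of `p`, hence zero, and `f` is the inclusion. Applied to an isomorphism
`H ≃+ K` fixing `1`, this shows that it is the identity on underlying elements, so `H = K`.
-/

open IsLocalRing

lemma PadicInt.isUnit_natCast_of_coprime {p n : ℕ} [Fact p.Prime] (h : p.Coprime n) :
    IsUnit (n : ℤ_[p]) :=
  PadicInt.isUnit_iff.mpr (PadicInt.norm_natCast_eq_one_iff.mpr h)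

lemma PadicInt.eq_zero_of_forall_pow_dvd {p : ℕ} [Fact p.Prime] {y : ℤ_[p]}
    (h : ∀ k : ℕ, (p : ℤ_[p]) ^ k ∣ y) : y = 0 :=
  IsHausdorff.haus (I := maximalIdeal ℤ_[p]) inferInstance y fun k => by
    simpa [PadicInt.maximalIdeal_eq_span_p, Ideal.span_singleton_pow, SModEq.sub_mem,
      Ideal.mem_span_singleton] using h k

namespace Zhat

lemma exists_eq_zsmul_one_add_prime_pow_zsmul (x : Zhat) (p : Nat.Primes) (k : ℕ) :
    ∃ (r : ℤ) (b : Zhat), x = r • 1 + ((p : ℕ) ^ k : ℤ) • b := by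
  set r : ℕ := (x p).appr k
  have hdvd : ∀ q : Nat.Primes, ((p : ℕ) : ℤ_[(q : ℕ)]) ^ k ∣ x q - r := by
    intro q
    rcases eq_or_ne q p with rfl | hqp
    · exact Ideal.mem_span_singleton.mp ((x q).appr_spec k)
    · refine ((PadicInt.isUnit_natCast_of_coprime ?_).pow k).dvd
      exact (Nat.coprime_primes q.2 p.2).mpr (Nat.Primes.coe_nat_injective.ne hqp)
  choose b hb using hdvd
  refine ⟨r, b, funext fun q => ?_⟩
  simp only [Pi.add_apply, Pi.smul_apply, Pi.one_apply]
  simp only [zsmul_eq_mul, mul_one]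
  push_cast
  linear_combination hb q

lemma eq_zero_of_forall_eq_prime_pow_zsmul {a : Zhat}
    (h : ∀ (p : Nat.Primes) (k : ℕ), ∃ c : Zhat, a = ((p : ℕ) ^ k : ℤ) • c) : a = 0 :=
  funext fun p => PadicInt.eq_zero_of_forall_pow_dvd fun k => by
    obtain ⟨c, rfl⟩ := h p k
    exact ⟨c p, by simp [zsmul_eq_mul]⟩

theorem addMonoidHom_eq_subtype_of_map_one {H : AddSubgroup Zhat}
    (hpure : ∀ (n : ℤ) (b : Zhat), 0 < n → n • b ∈ H → b ∈ H) (h1 : (1 : Zhat) ∈ H)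
    (f : H →+ Zhat) (hf : f ⟨1, h1⟩ = 1) : f = H.subtype := by
  refine AddMonoidHom.ext fun x => ?_
  rw [AddSubgroup.subtype_apply, ← sub_eq_zero]
  refine eq_zero_of_forall_eq_prime_pow_zsmul fun p k => ?_
  obtain ⟨r, b, hx⟩ := exists_eq_zsmul_one_add_prime_pow_zsmul x p k
  have hb : b ∈ H := by
    refine hpure _ _ (pow_pos (Int.natCast_pos.mpr p.2.pos) k) ?_
    rw [show ((p : ℕ) ^ k : ℤ) • b = x - r • 1 by rw [hx]; abel]
    exact sub_mem x.2 (zsmul_mem h1 r)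
  have hx' : x = r • ⟨1, h1⟩ + ((p : ℕ) ^ k : ℤ) • ⟨b, hb⟩ := Subtype.ext hx
  refine ⟨f ⟨b, hb⟩ - b, ?_⟩
  rw [hx', map_add, map_zsmul, map_zsmul, hf]
  simp only [AddSubgroup.coe_add, AddSubgroup.coe_zsmul, smul_sub]
  abel

end Zhat

theorem pure_subgroups_iso_eq_general (H K : AddSubgroup Zhat)
    (hHpure : ∀ (n : ℤ) (b : Zhat), 0 < n → n • b ∈ H → b ∈ H)
    (h1H : (1 : Zhat) ∈ H)
    (φ : H ≃+ K) (hφ : (φ ⟨1, h1H⟩ : Zhat) = 1) :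
    H = K := by
  have hφx (x : H) : (φ x : Zhat) = x :=
    DFunLike.congr_fun
      (Zhat.addMonoidHom_eq_subtype_of_map_one hHpure h1H (K.subtype.comp φ.toAddMonoidHom) hφ) x
  apply le_antisymm
  · intro z hz
    simpa [hφx] using (φ ⟨z, hz⟩).2
  · intro z hz
    have hz' : ((φ.symm ⟨z, hz⟩ : H) : Zhat) = z := by
      simpa using (hφx (φ.symm ⟨z, hz⟩)).symm
    exact hz' ▸ (φ.symm ⟨z, hz⟩).2

/-- Distinct pure subgroups of `∏_p ℤ_p` containing `1` (i.e., distinct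
Z-subgroups of `Ẑ`) are non-isomorphic over `1`: if a group isomorphism between two
of them fixes `1`, then they are equal. -/
theorem pure_subgroups_iso_eq (H K : AddSubgroup Zhat)
    (hHpure : ∀ (n : ℤ) (b : Zhat), 0 < n → n • b ∈ H → b ∈ H)
    (hKpure : ∀ (n : ℤ) (b : Zhat), 0 < n → n • b ∈ K → b ∈ K)
    (h1H : (1 : Zhat) ∈ H) (h1K : (1 : Zhat) ∈ K)
    (φ : H ≃+ K) (hφ : (φ ⟨1, h1H⟩ : Zhat) = 1) :
    H = K :=
  pure_subgroups_iso_eq_general H K hHpure h1H φ hφ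
end

section
/- Let (G, e) be an unordered Z-group satisfying ⋂_{n>0} nG = {0}. Then every group automorphism f of G with f(e) = e is the identity. -/
theorem AddMonoidHom.map_zsmul_add_zsmul_sub_self {G : Type*} [AddCommGroup G] (f : G →+ G)
    {e : G} (hf : f e = e) (n k : ℤ) (h : G) :
    f (n • h + k • e) - (n • h + k • e) = n • (f h - h) := by
  rw [map_add, map_zsmul, map_zsmul, hf, smul_sub]
  abel

theorem leibnizian_rigid_general (G : Type*) [AddCommGroup G] (e : G)
    (hdiv : ∀ g : G, ∀ n : ℤ, 0 < n → ∃ h : G, ∃ k : ℤ, g = n • h + k • e)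
    (hleib : ∀ g : G, (∀ n : ℤ, 0 < n → ∃ h : G, g = n • h) → g = 0)
    (f : G ≃+ G) (hf : f e = e) :
    ∀ x : G, f x = x := by
  intro x
  rw [← sub_eq_zero]
  refine hleib _ fun n hn => ?_
  obtain ⟨h, k, rfl⟩ := hdiv x n hn
  exact ⟨f h - h, f.toAddMonoidHom.map_zsmul_add_zsmul_sub_self hf n k h⟩

/-- A Leibnizian unordered Z-group is rigid: every group automorphism fixing the
distinguished element `e` is the identity. -/
theorem leibnizian_rigid (G : Type*) [AddCommGroup G] (e : G)
    (htf : ∀ (n : ℤ) (g : G), n ≠ 0 → n • g = 0 → g = 0)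
    (hne : e ≠ 0)
    (hnd : ∀ p : ℕ, p.Prime → ¬ ∃ h : G, e = (p : ℤ) • h)
    (hdiv : ∀ g : G, ∀ n : ℤ, 0 < n → ∃ h : G, ∃ k : ℤ, g = n • h + k • e)
    (hleib : ∀ g : G, (∀ n : ℤ, 0 < n → ∃ h : G, g = n • h) → g = 0)
    (f : G ≃+ G) (hf : f e = e) :
    ∀ x : G, f x = x :=
  leibnizian_rigid_general G e hdiv hleib f hf
end

section
/- Let (G, e) be an unordered Z-group and let D = ⋂_{n>0} nG. Then D is a divisible subgroup of G, and there exists a subgroup L of G with e ∈ L such that G is the internal direct sum of D and L (i.e., D ∩ L = {0} and D + L = G), L is a pure subgroup of G, and ⋂_{n>0} nL = {0} (where nL = {n·l : l ∈ L}). -/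
/-
In a torsion-free group `G`, the subgroup `D = ⋂ nG` is divisible: if `d = n • x` and
`d = (n * m) • y`, then `n • (x - m • y) = 0`, so `x = m • y ∈ mG`. Divisible groups are injective
`ℤ`-modules, so the projection `D ⊕ ℤe → D` extends to a retraction `π : G → D` and `L = ker π` is a
complement of `D` containing `e`; this needs `D ∩ ℤe = 0`, which holds because a nonzero multiple
`k • e` lying in `pG` for a prime `p ∤ k` would make `e` itself `p`-divisible. A complement of `D`
is pure since `G / D ≅ L` is torsion-free, and `⋂ nL ⊆ D ∩ L = 0`.
-/

/-- The subgroup `⋂_{n>0} nG` of all elements divisible by every positive integer. -/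
def divisiblePart (G : Type*) [AddCommGroup G] : AddSubgroup G where
  carrier := {g | ∀ n : ℤ, 0 < n → ∃ h, g = n • h}
  zero_mem' := fun n _ => ⟨0, by simp⟩
  add_mem' := by
    rintro a b ha hb n hn
    obtain ⟨x, rfl⟩ := ha n hn
    obtain ⟨y, rfl⟩ := hb n hn
    exact ⟨x + y, by rw [smul_add]⟩
  neg_mem' := by
    rintro a ha n hn
    obtain ⟨x, rfl⟩ := ha n hn
    exact ⟨-x, by rw [smul_neg]⟩

open AddSubgroup

section

variable {G : Type*} [AddCommGroup G]

theorem exists_zsmul_eq_of_mem_divisiblePart [IsAddTorsionFree G] {d : G}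
    (hd : d ∈ divisiblePart G) {n : ℤ} (hn : 0 < n) : ∃ d' ∈ divisiblePart G, d = n • d' := by
  obtain ⟨x, rfl⟩ := hd n hn
  refine ⟨x, fun m hm => ?_, rfl⟩
  obtain ⟨y, hy⟩ := hd (n * m) (mul_pos hn hm)
  refine ⟨y, (zsmul_right_injective hn.ne') ?_⟩
  simp only [hy, mul_smul]

noncomputable instance divisiblePart.divisibleBy [IsAddTorsionFree G] :
    DivisibleBy (divisiblePart G) ℤ :=
  divisibleByOfSMulRightSurj _ _ fun {n} hn ⟨d, hd⟩ => by
    rcases hn.lt_or_gt with hneg | hpos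
    · obtain ⟨d', hd', rfl⟩ := exists_zsmul_eq_of_mem_divisiblePart hd (neg_pos.mpr hneg)
      exact ⟨⟨-d', neg_mem hd'⟩, Subtype.ext (by simp)⟩
    · obtain ⟨d', hd', rfl⟩ := exists_zsmul_eq_of_mem_divisiblePart hd hpos
      exact ⟨⟨d', hd'⟩, rfl⟩

theorem eq_zero_of_zsmul_mem_divisiblePart {e : G}
    (hnd : ∀ p : ℕ, p.Prime → ¬ ∃ h : G, e = (p : ℤ) • h) {k : ℤ}
    (hk : k • e ∈ divisiblePart G) : k = 0 := by
  by_contra hk0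
  obtain ⟨p, hkp, hp⟩ := Nat.exists_infinite_primes (k.natAbs + 1)
  obtain ⟨h, hh⟩ := hk p (by exact_mod_cast hp.pos)
  have hcop : IsCoprime (p : ℤ) k := Int.isCoprime_iff_gcd_eq_one.mpr <|
    Nat.coprime_of_lt_prime (Int.natAbs_ne_zero.mpr hk0) hkp hp
  obtain ⟨a, b, hab⟩ := hcop
  refine hnd p hp ⟨a • e + b • h, ?_⟩
  calc e = (a * p + b * k) • e := by rw [hab, one_smul]
    _ = (p : ℤ) • (a • e + b • h) := by
      rw [add_smul, mul_smul, mul_smul, hh, smul_add, smul_comm a, smul_comm b]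

theorem disjoint_divisiblePart_zmultiples {e : G}
    (hnd : ∀ p : ℕ, p.Prime → ¬ ∃ h : G, e = (p : ℤ) • h) :
    Disjoint (divisiblePart G) (zmultiples e) :=
  disjoint_def.mpr fun hD ⟨k, hk⟩ => by
    subst hk
    simp [eq_zero_of_zsmul_mem_divisiblePart hnd hD]

theorem AddSubgroup.exists_add_eq_of_codisjoint {D L : AddSubgroup G} (hDL : Codisjoint D L)
    (g : G) : ∃ d ∈ D, ∃ l ∈ L, d + l = g :=
  mem_sup.mp (hDL.eq_top ▸ mem_top g)

theorem AddSubgroup.exists_le_isCompl_of_disjoint (D H : AddSubgroup G) [DivisibleBy D ℤ]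
    (hDH : Disjoint D H) : ∃ L : AddSubgroup G, H ≤ L ∧ IsCompl D L := by
  have hinj : Function.Injective (D.subtype.coprod H.subtype) := by
    refine (injective_iff_map_eq_zero _).mpr fun ⟨d, h⟩ hdh => ?_
    obtain ⟨hd, hh⟩ := disjoint_iff_add_eq_zero.mp hDH d.2 h.2 hdh
    exact Prod.ext (Subtype.ext hd) (Subtype.ext hh)
  obtain ⟨π, hπ⟩ := (Module.Baer.of_divisible D).extension_property_addMonoidHom _ hinj
    (AddMonoidHom.fst D H)
  have hπD (d : D) : π d = d := by simpa using DFunLike.congr_fun hπ (d, 0)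
  have hπH (h : H) : π h = 0 := by simpa using DFunLike.congr_fun hπ (0, h)
  refine ⟨π.ker, fun h hh => hπH ⟨h, hh⟩, disjoint_def.mpr fun {x} hxD hxL => ?_, ?_⟩
  · exact congrArg Subtype.val ((hπD ⟨x, hxD⟩).symm.trans hxL)
  · exact codisjoint_iff.mpr (eq_top_iff.mpr fun g _ => mem_sup.mpr
      ⟨π g, (π g).2, g - π g, by simp [hπD], add_sub_cancel _ _⟩)

theorem AddSubgroup.mem_of_zsmul_mem_of_isCompl [IsAddTorsionFree G] {D L : AddSubgroup G}
    (hDL : IsCompl D L) {n : ℤ} (hn : n ≠ 0) {b : G} (hb : n • b ∈ L) : b ∈ L := by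
  obtain ⟨d, hd, l, hl, rfl⟩ := exists_add_eq_of_codisjoint hDL.codisjoint b
  have hndL : n • d ∈ L := by simpa [smul_add] using sub_mem hb (zsmul_mem hl n)
  have hd0 : d = 0 := (IsAddTorsionFree.zsmul_eq_zero_iff_right hn).mp
    (disjoint_def.mp hDL.disjoint (zsmul_mem hd n) hndL)
  simpa [hd0] using hl

end

theorem direct_sum_decomposition_general (G : Type*) [AddCommGroup G] (e : G)
    (htf : ∀ (n : ℤ) (g : G), n ≠ 0 → n • g = 0 → g = 0)
    (hnd : ∀ p : ℕ, p.Prime → ¬ ∃ h : G, e = (p : ℤ) • h) :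
    (∀ d ∈ divisiblePart G, ∀ n : ℤ, 0 < n → ∃ d' ∈ divisiblePart G, d = n • d') ∧
    ∃ L : AddSubgroup G, e ∈ L ∧
      (∀ g : G, g ∈ divisiblePart G → g ∈ L → g = 0) ∧
      (∀ g : G, ∃ d ∈ divisiblePart G, ∃ l ∈ L, g = d + l) ∧
      (∀ (n : ℤ) (b : G), 0 < n → n • b ∈ L → b ∈ L) ∧
      (∀ l ∈ L, (∀ n : ℤ, 0 < n → ∃ l' ∈ L, l = n • l') → l = 0) := by
  have : IsAddTorsionFree G := ⟨fun n hn a b hab => sub_eq_zero.mp <|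
    htf n (a - b) (by exact_mod_cast hn) (by simpa [smul_sub, sub_eq_zero] using hab)⟩
  obtain ⟨L, heL, hDL⟩ := (divisiblePart G).exists_le_isCompl_of_disjoint (zmultiples e)
    (disjoint_divisiblePart_zmultiples hnd)
  have hdisj : ∀ g ∈ divisiblePart G, g ∈ L → g = 0 := fun g => disjoint_def.mp hDL.disjoint
  refine ⟨fun d hd n hn => exists_zsmul_eq_of_mem_divisiblePart hd hn, L,
    heL (mem_zmultiples e), hdisj, fun g => ?_,
    fun n b hn => mem_of_zsmul_mem_of_isCompl hDL hn.ne', fun l hl hl_div => hdisj l ?_ hl⟩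
  · obtain ⟨d, hd, l, hl, hdl⟩ := exists_add_eq_of_codisjoint hDL.codisjoint g
    exact ⟨d, hd, l, hl, hdl.symm⟩
  · intro n hn
    obtain ⟨l', -, hl'⟩ := hl_div n hn
    exact ⟨l', hl'⟩

/-- In an unordered Z-group `(G, e)`, the subgroup `D = ⋂_{n>0} nG` is divisible,
and `G = D ⊕ L` for some pure subgroup `L` containing `e` with `⋂_{n>0} nL = 0`. -/
theorem direct_sum_decomposition (G : Type*) [AddCommGroup G] (e : G)
    (htf : ∀ (n : ℤ) (g : G), n ≠ 0 → n • g = 0 → g = 0)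
    (hne : e ≠ 0)
    (hnd : ∀ p : ℕ, p.Prime → ¬ ∃ h : G, e = (p : ℤ) • h)
    (hdiv : ∀ g : G, ∀ n : ℤ, 0 < n → ∃ h : G, ∃ k : ℤ, g = n • h + k • e) :
    (∀ d ∈ divisiblePart G, ∀ n : ℤ, 0 < n → ∃ d' ∈ divisiblePart G, d = n • d') ∧
    ∃ L : AddSubgroup G, e ∈ L ∧
      (∀ g : G, g ∈ divisiblePart G → g ∈ L → g = 0) ∧
      (∀ g : G, ∃ d ∈ divisiblePart G, ∃ l ∈ L, g = d + l) ∧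
      (∀ (n : ℤ) (b : G), 0 < n → n • b ∈ L → b ∈ L) ∧
      (∀ l ∈ L, (∀ n : ℤ, 0 < n → ∃ l' ∈ L, l = n • l') → l = 0) :=
  direct_sum_decomposition_general G e htf hnd
end

section
/- Let (G, e) be an unordered Z-group, D = ⋂_{n>0} nG, and L a subgroup of G with e ∈ L such that G is the internal direct sum of D and L. Then: (a) every group automorphism f of G with f(e) = e maps D onto D, and setting g = f restricted to D and h(l) = f(l) − l for l ∈ L yields a group automorphism g of D and a group homomorphism h : L → D with h(e) = 0 such that f(d + l) = g(d) + h(l) + l for all d ∈ D and l ∈ L; (b) conversely, for every group automorphism g of D and every group homomorphism h : L → D with h(e) = 0, the map sending d + l to g(d) + h(l) + l (d ∈ D, l ∈ L) is a group automorphism f of G with f(e) = e. -/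
/-!
An automorphism `f` commutes with multiplication by `n`, so it preserves `D = ⋂ nG`; and writing
`x = n y + k e` (possible for every `n > 0`), `f x - x = n (f y - y)` because `f e = e`, so
`f x - x ∈ D`. Conversely, `G = D ⊕ L` identifies `G` with `D × L`, on which
`(d, l) ↦ (g d + h l, l)` is a triangular automorphism.
-/

section

variable {G H : Type*} [AddCommGroup G] [AddCommGroup H]

theorem map_mem_divisiblePart (f : G →+ H) {x : G} (hx : x ∈ divisiblePart G) :
    f x ∈ divisiblePart H := fun n hn ↦ by
  obtain ⟨y, rfl⟩ := hx n hn
  exact ⟨f y, map_zsmul f n y⟩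

theorem AddEquiv.image_divisiblePart (f : G ≃+ H) :
    f '' (divisiblePart G : Set G) = divisiblePart H := by
  refine (Set.image_subset_iff.2 fun x hx ↦ map_mem_divisiblePart f.toAddMonoidHom hx).antisymm
    fun y hy ↦ ⟨f.symm y, map_mem_divisiblePart f.symm.toAddMonoidHom hy, f.apply_symm_apply y⟩

theorem sub_mem_divisiblePart_of_map_eq_self {e : G}
    (hdiv : ∀ g : G, ∀ n : ℤ, 0 < n → ∃ h : G, ∃ k : ℤ, g = n • h + k • e)
    (f : G →+ G) (hfe : f e = e) (x : G) : f x - x ∈ divisiblePart G := fun n hn ↦ by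
  obtain ⟨y, k, rfl⟩ := hdiv x n hn
  refine ⟨f y - y, ?_⟩
  rw [map_add, map_zsmul, map_zsmul, hfe, smul_sub]
  abel

namespace AddSubgroup

theorem isCompl_of_forall {A B : AddSubgroup G} (hdisj : ∀ g : G, g ∈ A → g ∈ B → g = 0)
    (hspan : ∀ g : G, ∃ a ∈ A, ∃ b ∈ B, g = a + b) : IsCompl A B where
  disjoint := disjoint_def.2 fun ha hb ↦ hdisj _ ha hb
  codisjoint := codisjoint_iff.2 <| eq_top_iff.2 fun g _ ↦ by
    obtain ⟨a, ha, b, hb, rfl⟩ := hspan g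
    exact mem_sup.2 ⟨a, ha, b, hb, rfl⟩

noncomputable def prodAddEquivOfIsCompl {A B : AddSubgroup G} (hAB : IsCompl A B) :
    A × B ≃+ G :=
  AddEquiv.ofBijective (A.subtype.coprod B.subtype) <| by
    refine ⟨(injective_iff_map_eq_zero _).2 fun ⟨a, b⟩ hab ↦ ?_, fun g ↦ ?_⟩
    · have hab : (a : G) + b = 0 := hab
      have ha : (a : G) = 0 := disjoint_def.1 hAB.disjoint a.2 <| by
        rw [eq_neg_of_add_eq_zero_left hab]; exact neg_mem b.2
      have hb : (b : G) = 0 := by rwa [ha, zero_add] at hab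
      ext <;> simp [ha, hb]
    · obtain ⟨a, ha, b, hb, rfl⟩ := mem_sup.1 (hAB.codisjoint.eq_top ▸ mem_top g)
      exact ⟨(⟨a, ha⟩, ⟨b, hb⟩), rfl⟩

theorem exists_addEquiv_add_eq_of_isCompl {A B : AddSubgroup G} (hAB : IsCompl A B)
    (g : A ≃+ A) (h : B →+ A) :
    ∃ f : G ≃+ G, ∀ (a : A) (b : B), f (a + b) = g a + h b + b := by
  let ψ := prodAddEquivOfIsCompl hAB.symm
  let shear : B × A ≃+ B × A :=
    (LinearEquiv.skewProd (AddEquiv.refl B).toIntLinearEquiv g.toIntLinearEquiv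
      h.toIntLinearMap).toAddEquiv
  refine ⟨ψ.symm.trans (shear.trans ψ), fun a b ↦ ?_⟩
  have hψ : ψ.symm (a + b) = (b, a) := ψ.symm_apply_eq.2 (add_comm _ _)
  rw [AddEquiv.trans_apply, AddEquiv.trans_apply, hψ]
  change (b : G) + ((g a + h b : A) : G) = _
  rw [coe_add]
  abel

end AddSubgroup

end

theorem automorphism_description_general (G : Type*) [AddCommGroup G] (e : G)
    (hdiv : ∀ g : G, ∀ n : ℤ, 0 < n → ∃ h : G, ∃ k : ℤ, g = n • h + k • e)
    (L : AddSubgroup G) (heL : e ∈ L)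
    (hDL : ∀ g : G, g ∈ divisiblePart G → g ∈ L → g = 0)
    (hsum : ∀ g : G, ∃ d ∈ divisiblePart G, ∃ l ∈ L, g = d + l) :
    (∀ f : G ≃+ G, f e = e →
      (⇑f '' (divisiblePart G : Set G) = (divisiblePart G : Set G)) ∧
      (∀ l ∈ L, f l - l ∈ divisiblePart G) ∧
      (∀ d ∈ divisiblePart G, ∀ l ∈ L, f (d + l) = f d + (f l - l) + l)) ∧
    (∀ (g : divisiblePart G ≃+ divisiblePart G) (h : L →+ divisiblePart G),
      h ⟨e, heL⟩ = 0 →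
      ∃ f : G ≃+ G, f e = e ∧
        ∀ (d : divisiblePart G) (l : L),
          f ((d : G) + (l : G)) = (g d : G) + (h l : G) + (l : G)) := by
  refine ⟨fun f hfe ↦ ⟨f.image_divisiblePart,
    fun l _ ↦ sub_mem_divisiblePart_of_map_eq_self hdiv f.toAddMonoidHom hfe l,
    fun d _ l _ ↦ by rw [map_add]; abel⟩, fun g h he0 ↦ ?_⟩
  obtain ⟨f, hf⟩ :=
    AddSubgroup.exists_addEquiv_add_eq_of_isCompl (AddSubgroup.isCompl_of_forall hDL hsum) g h
  refine ⟨f, ?_, hf⟩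
  simpa [he0] using hf 0 ⟨e, heL⟩

/-- Description of automorphisms of an unordered Z-group `G = D ⊕ L` fixing `e`:
(a) every such automorphism maps `D` onto `D`, restricts on `D` to an automorphism `g`,
and `h(l) = f(l) − l` is a homomorphism `L → D` with `h(e) = 0` and
`f(d + l) = g(d) + h(l) + l`; (b) conversely any such pair `(g, h)` yields an
automorphism of `G` fixing `e`. -/
theorem automorphism_description (G : Type*) [AddCommGroup G] (e : G)
    (htf : ∀ (n : ℤ) (g : G), n ≠ 0 → n • g = 0 → g = 0)
    (hne : e ≠ 0)
    (hnd : ∀ p : ℕ, p.Prime → ¬ ∃ h : G, e = (p : ℤ) • h)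
    (hdiv : ∀ g : G, ∀ n : ℤ, 0 < n → ∃ h : G, ∃ k : ℤ, g = n • h + k • e)
    (L : AddSubgroup G) (heL : e ∈ L)
    (hDL : ∀ g : G, g ∈ divisiblePart G → g ∈ L → g = 0)
    (hsum : ∀ g : G, ∃ d ∈ divisiblePart G, ∃ l ∈ L, g = d + l) :
    (∀ f : G ≃+ G, f e = e →
      (⇑f '' (divisiblePart G : Set G) = (divisiblePart G : Set G)) ∧
      (∀ l ∈ L, f l - l ∈ divisiblePart G) ∧
      (∀ d ∈ divisiblePart G, ∀ l ∈ L, f (d + l) = f d + (f l - l) + l)) ∧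
    (∀ (g : divisiblePart G ≃+ divisiblePart G) (h : L →+ divisiblePart G),
      h ⟨e, heL⟩ = 0 →
      ∃ f : G ≃+ G, f e = e ∧
        ∀ (d : divisiblePart G) (l : L),
          f ((d : G) + (l : G)) = (g d : G) + (h l : G) + (l : G)) :=
  automorphism_description_general G e hdiv L heL hDL hsum
end

section
/- Let (G, e) be an unordered Z-group such that every group automorphism f of G with f(e) = e is the identity. Then ⋂_{n>0} nG = {0}. -/
/-!
Let `g ∈ ⋂ nG`. If some `m • g = a • e` with `m ≠ 0`, then `a = 0`: otherwise, for a prime `p ∤ a`,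
writing `g = p • y` shows that `e` is `p`-divisible. So `m • g = 0` and `g = 0`.
Otherwise `g` is independent of `e`, so injectivity of `ℚ` gives `ψ : G →+ ℚ` with `ψ e = 0`,
`ψ g = 1`, while the divisibility of `g` gives `ρ : ℚ →+ G` with `ρ 1 = g`. The reflection
`x ↦ x - 2 • ρ (ψ x)` is an automorphism fixing `e` and sending `g` to `-g`; rigidity forces `g = 0`.
-/

section

variable {G A : Type*} [AddCommGroup G] [AddCommGroup A]

def AddMonoidHom.reflectionOfSection (f : G →+ A) (s : A →+ G) (hs : ∀ a, f (s a) = a) :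
    G ≃+ G :=
  let σ : G →+ G := AddMonoidHom.id G - 2 • s.comp f
  have hσ : Function.Involutive σ := fun x ↦ by
    simp only [σ, AddMonoidHom.sub_apply, AddMonoidHom.id_apply, AddMonoidHom.smul_apply,
      AddMonoidHom.comp_apply, map_sub, map_nsmul, hs]
    abel
  AddEquiv.mk' hσ.toPerm σ.map_add

theorem AddMonoidHom.reflectionOfSection_apply (f : G →+ A) (s : A →+ G)
    (hs : ∀ a, f (s a) = a) (x : G) : f.reflectionOfSection s hs x = x - 2 • s (f x) :=
  rfl

end

section

variable {G : Type*} [AddCommGroup G]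

theorem exists_addMonoidHom_rat_eq_zero_eq_one {e g : G}
    (hindep : ∀ m a : ℤ, m • g = a • e → m = 0) : ∃ ψ : G →+ ℚ, ψ e = 0 ∧ ψ g = 1 := by
  let π := QuotientAddGroup.mk' (AddSubgroup.zmultiples e)
  have hinj : Function.Injective (zmultiplesHom _ (π g)) := by
    refine (injective_iff_map_eq_zero _).2 fun m hm ↦ ?_
    obtain ⟨a, ha⟩ := (QuotientAddGroup.eq_zero_iff (m • g)).1 (by simpa [π] using hm) |>
      AddSubgroup.mem_zmultiples_iff.1
    exact hindep m a ha.symm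
  obtain ⟨φ, hφ⟩ := (Module.Baer.of_divisible ℚ).extension_property_addMonoidHom _ hinj
    (zmultiplesHom ℚ 1)
  refine ⟨φ.comp π, ?_, by simpa using DFunLike.congr_fun hφ 1⟩
  simp [π, (QuotientAddGroup.eq_zero_iff e).2 (AddSubgroup.mem_zmultiples e)]

theorem exists_eq_zsmul_of_isCoprime {n a : ℤ} (hna : IsCoprime n a) {e y : G}
    (h : a • e = n • y) : ∃ z, e = n • z := by
  obtain ⟨u, v, huv⟩ := hna
  refine ⟨u • e + v • y, ?_⟩
  calc e = (u * n + v * a) • e := by rw [huv, one_smul]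
    _ = n • (u • e + v • y) := by rw [add_smul, mul_smul v, h]; module

theorem eq_zero_of_zsmul_eq_zsmul_of_forall_dvd {e g : G}
    (hnd : ∀ p : ℕ, p.Prime → ¬ ∃ h : G, e = (p : ℤ) • h)
    (hg : ∀ n : ℤ, 0 < n → ∃ h : G, g = n • h) {m a : ℤ} (h : m • g = a • e) : a = 0 := by
  by_contra ha
  obtain ⟨p, hap, hp⟩ := Nat.exists_infinite_primes (a.natAbs + 1)
  have hpa : ¬ (p : ℤ) ∣ a := fun hdvd ↦ ha (Int.eq_zero_of_dvd_of_natAbs_lt_natAbs hdvd (by simpa))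
  obtain ⟨y, rfl⟩ := hg p (by exact_mod_cast hp.pos)
  refine hnd p hp (exists_eq_zsmul_of_isCoprime
    ((Nat.prime_iff_prime_int.1 hp).coprime_iff_not_dvd.2 hpa) (y := m • y) ?_)
  rw [← h, smul_comm]

variable [IsAddTorsionFree G]

theorem exists_addMonoidHom_rat_apply_one {g : G} (hg : ∀ n : ℤ, 0 < n → ∃ h : G, g = n • h) :
    ∃ ρ : ℚ →+ G, ρ 1 = g := by
  choose d hd using hg
  let ρ : ℚ → G := fun q ↦ q.num • d q.den (Int.natCast_pos.2 q.pos)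
  have hρ : ∀ q : ℚ, (q.den : ℤ) • ρ q = q.num • g := fun q ↦ by
    rw [hd q.den (Int.natCast_pos.2 q.pos), smul_comm]
  -- `ρ q` is the unique solution `y` of `n • y = m • g` for any presentation `q = m / n`
  have hρ_unique : ∀ (q : ℚ) (m n : ℤ) (y : G), n ≠ 0 → q * n = m → n • y = m • g → ρ q = y := by
    intro q m n y hn hq hy
    have hnum : n * q.num = q.den * m := by
      have := Rat.mul_den_eq_num q
      exact_mod_cast (by rw [← hq, ← this]; ring : (n : ℚ) * q.num = q.den * m)
    apply zsmul_right_injective (mul_ne_zero hn (Int.natCast_ne_zero.2 q.den_nz))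
    calc (n * q.den) • ρ q = (n * q.num) • g := by rw [mul_smul, hρ, mul_smul]
      _ = (q.den * m) • g := by rw [hnum]
      _ = (n * q.den) • y := by rw [mul_smul, ← hy, ← mul_smul, mul_comm]
  refine ⟨AddMonoidHom.mk' ρ fun q r ↦ ?_, hρ_unique 1 1 1 g one_ne_zero (by simp) rfl⟩
  refine hρ_unique (q + r) (q.num * r.den + r.num * q.den) (q.den * r.den) _
    (mul_ne_zero (Int.natCast_ne_zero.2 q.den_nz) (Int.natCast_ne_zero.2 r.den_nz)) ?_ ?_
  · push_cast
    linear_combination (r.den : ℚ) * Rat.mul_den_eq_num q + (q.den : ℚ) * Rat.mul_den_eq_num r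
  · calc ((q.den : ℤ) * r.den) • (ρ q + ρ r)
          = (r.den : ℤ) • ((q.den : ℤ) • ρ q) + (q.den : ℤ) • ((r.den : ℤ) • ρ r) := by module
      _ = (q.num * r.den + r.num * q.den) • g := by rw [hρ, hρ]; module

end

theorem rigid_unordered_is_leibnizian_general (G : Type*) [AddCommGroup G] (e : G)
    (htf : ∀ (n : ℤ) (g : G), n ≠ 0 → n • g = 0 → g = 0)
    (hnd : ∀ p : ℕ, p.Prime → ¬ ∃ h : G, e = (p : ℤ) • h)
    (hrig : ∀ f : G ≃+ G, f e = e → ∀ x : G, f x = x) :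
    ∀ g : G, (∀ n : ℤ, 0 < n → ∃ h : G, g = n • h) → g = 0 := by
  intro g hg
  have : IsAddTorsionFree G := ⟨fun n hn x y hxy ↦ sub_eq_zero.1 <|
    htf n (x - y) (by exact_mod_cast hn) (by simpa [natCast_zsmul, smul_sub, sub_eq_zero] using hxy)⟩
  by_cases hdep : ∃ m a : ℤ, m ≠ 0 ∧ m • g = a • e
  · obtain ⟨m, a, hm, hma⟩ := hdep
    obtain rfl := eq_zero_of_zsmul_eq_zsmul_of_forall_dvd hnd hg hma
    exact (IsAddTorsionFree.zsmul_eq_zero_iff_right hm).1 (by rwa [zero_smul] at hma)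
  obtain ⟨ψ, hψe, hψg⟩ := exists_addMonoidHom_rat_eq_zero_eq_one (e := e) (g := g)
    fun m a h ↦ by_contra fun hm ↦ hdep ⟨m, a, hm, h⟩
  obtain ⟨ρ, rfl⟩ := exists_addMonoidHom_rat_apply_one hg
  have hψρ : ∀ q, ψ (ρ q) = q := fun q ↦ by simpa [hψg] using map_rat_smul (ψ.comp ρ) q 1
  have hfix := hrig (ψ.reflectionOfSection ρ hψρ)
    (by simp [AddMonoidHom.reflectionOfSection_apply, hψe]) (ρ 1)
  rw [AddMonoidHom.reflectionOfSection_apply, hψg, sub_eq_self] at hfix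
  exact two_nsmul_eq_zero.1 hfix

/-- A rigid unordered Z-group is Leibnizian: if every group automorphism of `G`
fixing `e` is the identity, then `⋂_{n>0} nG = 0`. -/
theorem rigid_unordered_is_leibnizian (G : Type*) [AddCommGroup G] (e : G)
    (htf : ∀ (n : ℤ) (g : G), n ≠ 0 → n • g = 0 → g = 0)
    (hne : e ≠ 0)
    (hnd : ∀ p : ℕ, p.Prime → ¬ ∃ h : G, e = (p : ℤ) • h)
    (hdiv : ∀ g : G, ∀ n : ℤ, 0 < n → ∃ h : G, ∃ k : ℤ, g = n • h + k • e)
    (hrig : ∀ f : G ≃+ G, f e = e → ∀ x : G, f x = x) :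
    ∀ g : G, (∀ n : ℤ, 0 < n → ∃ h : G, g = n • h) → g = 0 :=
  rigid_unordered_is_leibnizian_general G e htf hnd hrig
end

section
/- Let G be a rigid Z-group and let D = ⋂_{n>0} nG. Then there is no convex subgroup C of G such that 1 ∈ C, C ≠ G, and C + D = G. -/
/-!
Convexity of `C` makes `E = C ∩ D` divisible, hence an injective `ℤ`-module, so `E` has a
complement `F` inside `D`; since `C + D = G`, `F` is a complement of `C` in `G`, and it inherits
the divisibility of `D`. Convexity of `C` makes the projection onto `F` along `C` monotone, so
`c + f ↦ c + 2f` is an order automorphism of `G` fixing `1 ∈ C`. By rigidity it is the identity,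
so `F = 0` and `C = G`.
-/

universe u v

section Divisible

variable {G : Type*} [AddCommGroup G]

variable (G) in
def infinitelyDivisible : AddSubgroup G where
  carrier := {g | ∀ n : ℤ, 0 < n → ∃ h, g = n • h}
  zero_mem' _ _ := ⟨0, (smul_zero _).symm⟩
  add_mem' {a b} ha hb n hn := by
    obtain ⟨x, rfl⟩ := ha n hn
    obtain ⟨y, rfl⟩ := hb n hn
    exact ⟨x + y, (smul_add n x y).symm⟩
  neg_mem' {a} ha n hn := by
    obtain ⟨x, rfl⟩ := ha n hn
    exact ⟨-x, (smul_neg n x).symm⟩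

theorem exists_mem_infinitelyDivisible_zsmul_eq [IsAddTorsionFree G] {d : G}
    (hd : d ∈ infinitelyDivisible G) {n : ℤ} (hn : 0 < n) :
    ∃ h ∈ infinitelyDivisible G, d = n • h := by
  obtain ⟨h, rfl⟩ := hd n hn
  refine ⟨h, fun m hm => ?_, rfl⟩
  obtain ⟨k, hk⟩ := hd (n * m) (mul_pos hn hm)
  exact ⟨k, zsmul_right_injective hn.ne' (by rwa [mul_smul] at hk)⟩

theorem Submodule.injective_of_forall_exists_zsmul_eq {E : Submodule ℤ G}
    (hE : ∀ a ∈ E, ∀ n : ℤ, 0 < n → ∃ b ∈ E, a = n • b) : Module.Injective ℤ E := by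
  have hsurj : ∀ {n : ℤ}, n ≠ 0 → Function.Surjective fun a : E => n • a := by
    intro n hn a
    rcases hn.lt_or_gt with hneg | hpos
    · obtain ⟨b, hb, hab⟩ := hE a a.2 (-n) (neg_pos.mpr hneg)
      exact ⟨-⟨b, hb⟩, Subtype.ext (by simp [hab])⟩
    · obtain ⟨b, hb, hab⟩ := hE a a.2 n hpos
      exact ⟨⟨b, hb⟩, Subtype.ext hab.symm⟩
  let _ := divisibleByOfSMulRightSurj E ℤ hsurj
  exact (Module.Baer.of_divisible E).injective

end Divisible

theorem Submodule.exists_le_isCompl_of_injective_inf {R : Type u} {M : Type v} [Ring R]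
    [AddCommGroup M] [Module R M] [Small.{v} R] {C D : Submodule R M}
    [Module.Injective R (C ⊓ D : Submodule R M)] (hCD : C ⊔ D = ⊤) : ∃ F ≤ D, IsCompl C F := by
  obtain ⟨r, hr⟩ := Module.Injective.extension_property R _ _ _ (C ⊓ D).subtype
    Subtype.val_injective LinearMap.id
  have hr' : ∀ x : ↥(C ⊓ D), r x = x := LinearMap.congr_fun hr
  refine ⟨LinearMap.ker r ⊓ D, inf_le_right, ?_, ?_⟩
  · rw [disjoint_iff_inf_le]
    rintro x ⟨hxC, hxr, hxD⟩
    have hx : r x = ⟨x, hxC, hxD⟩ := hr' ⟨x, hxC, hxD⟩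
    rw [LinearMap.mem_ker.mp hxr] at hx
    exact (congrArg Subtype.val hx).symm
  · rw [codisjoint_iff, eq_top_iff]
    intro x _
    obtain ⟨c, hc, d, hd, rfl⟩ := Submodule.mem_sup.mp (hCD ▸ Submodule.mem_top : x ∈ C ⊔ D)
    have hrr : r (r d) = r d := hr' (r d)
    exact Submodule.mem_sup.mpr ⟨c + r d, C.add_mem hc (r d).2.1, d - r d,
      ⟨by simp [hrr], D.sub_mem hd (r d).2.2⟩, by abel⟩

section Convex

variable {G : Type*} [AddCommGroup G] [LinearOrder G] [IsOrderedAddMonoid G]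

def AddSubgroup.IsConvex (C : AddSubgroup G) : Prop :=
  ∀ ⦃x y : G⦄, -y ≤ x → x ≤ y → y ∈ C → x ∈ C

namespace AddSubgroup.IsConvex

variable {C : AddSubgroup G} (hC : C.IsConvex)
include hC

theorem mem_of_abs_le {x y : G} (hy : y ∈ C) (hxy : |x| ≤ |y|) : x ∈ C :=
  hC (abs_le.mp hxy).1 (abs_le.mp hxy).2 (abs_mem_iff.mpr hy)

theorem mem_of_zsmul_mem {x : G} {n : ℤ} (hn : 0 < n) (hx : n • x ∈ C) : x ∈ C := by
  refine hC.mem_of_abs_le hx ?_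
  rw [abs_zsmul, abs_of_pos hn]
  simpa using zsmul_le_zsmul_left (abs_nonneg x) (by omega : (1 : ℤ) ≤ n)

theorem moduleInjective_inf_infinitelyDivisible :
    Module.Injective ℤ ↥(C.toIntSubmodule ⊓ (infinitelyDivisible G).toIntSubmodule) := by
  refine Submodule.injective_of_forall_exists_zsmul_eq fun a ⟨haC, haD⟩ n hn => ?_
  obtain ⟨h, hhD, rfl⟩ := exists_mem_infinitelyDivisible_zsmul_eq haD hn
  exact ⟨h, ⟨hC.mem_of_zsmul_mem hn haC, hhD⟩, rfl⟩

variable {F : Submodule ℤ G} (hCF : IsCompl C.toIntSubmodule F)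
include hCF

theorem projection_nonneg {g : G} (hg : 0 ≤ g) : 0 ≤ F.projection _ hCF.symm g := by
  set p := F.projection _ hCF.symm
  have hpF : p g ∈ F := Submodule.projection_apply_mem _ g
  have hgC : g - p g ∈ C := by
    rw [← Submodule.projection_eq_self_sub_projection hCF.symm]
    exact Submodule.projection_apply_mem hCF.symm.symm g
  by_contra! hneg
  have hnegC : -p g ∈ C := by
    refine hC.mem_of_abs_le hgC (abs_le_abs_of_nonneg (neg_nonneg.mpr hneg.le) ?_)
    rw [sub_eq_add_neg]
    exact le_add_of_nonneg_left hg
  exact hneg.ne (Submodule.disjoint_def.mp hCF.disjoint _ (neg_mem_iff.mp hnegC) hpF)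

theorem strictMono_add_projection : StrictMono fun g => g + F.projection _ hCF.symm g := by
  intro x y hxy
  have h := hC.projection_nonneg hCF (sub_nonneg.mpr hxy.le)
  rw [map_sub, sub_nonneg] at h
  exact add_lt_add_of_lt_of_le hxy h

theorem exists_monotone_addEquiv (hF : ∀ f ∈ F, ∃ h, f = (2 : ℤ) • h) :
    ∃ φ : G ≃+ G, Monotone φ ∧ (∀ c ∈ C, φ c = c) ∧ ∀ f ∈ F, φ f = (2 : ℤ) • f := by
  set p := F.projection _ hCF.symm
  let ψ : G →+ G := (LinearMap.id + p).toAddMonoidHom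
  have hψ : StrictMono ψ := hC.strictMono_add_projection hCF
  have hsurj : Function.Surjective ψ := by
    intro g
    have hidem : ∀ x, p (p x) = p x := fun x =>
      Submodule.projection_apply_of_mem_left _ (Submodule.projection_apply_mem _ x)
    obtain ⟨h, hh⟩ := hF (p g) (Submodule.projection_apply_mem _ g)
    have hhalf : p g = p h + p h := by rw [← hidem g, hh, map_zsmul, two_zsmul]
    refine ⟨g - p h, ?_⟩
    show g - p h + p (g - p h) = g
    rw [map_sub, hidem, hhalf]
    abel
  refine ⟨AddEquiv.ofBijective ψ ⟨hψ.injective, hsurj⟩, hψ.monotone, fun c hc => ?_,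
    fun f hf => ?_⟩
  · show c + p c = c
    rw [Submodule.projection_apply_of_mem_right _ hc, add_zero]
  · show f + p f = (2 : ℤ) • f
    rw [Submodule.projection_apply_of_mem_left _ hf, two_zsmul]

end AddSubgroup.IsConvex

end Convex

theorem no_proper_convex_complement_general (G : Type*) [AddCommGroup G] [LinearOrder G] [IsOrderedAddMonoid G] (one : G)
    (hrig : ∀ f : G ≃+ G, Monotone f → f one = one → ∀ x : G, f x = x)
    (D : Set G) (hD : D = {g : G | ∀ n : ℤ, 0 < n → ∃ h : G, g = n • h}) :
    ¬ ∃ C : AddSubgroup G,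
        (∀ x y : G, -y ≤ x → x ≤ y → y ∈ C → x ∈ C) ∧
        one ∈ C ∧ C ≠ ⊤ ∧
        (∀ g : G, ∃ c ∈ C, ∃ d ∈ D, g = c + d) := by
  subst hD
  rintro ⟨C, hconv, honeC, hCtop, hsum⟩
  have hC : C.IsConvex := hconv
  have hCD : C.toIntSubmodule ⊔ (infinitelyDivisible G).toIntSubmodule = ⊤ := by
    refine eq_top_iff.mpr fun g _ => Submodule.mem_sup.mpr ?_
    obtain ⟨c, hc, d, hd, rfl⟩ := hsum g
    exact ⟨c, hc, d, hd, rfl⟩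
  have := hC.moduleInjective_inf_infinitelyDivisible
  obtain ⟨F, hFD, hCF⟩ := Submodule.exists_le_isCompl_of_injective_inf hCD
  obtain ⟨φ, hφ, hφC, hφF⟩ := hC.exists_monotone_addEquiv hCF fun f hf => hFD hf 2 two_pos
  have hFbot : F = ⊥ := by
    refine (Submodule.eq_bot_iff F).mpr fun f hf => ?_
    have hfix := hrig φ hφ (hφC one honeC) f
    rwa [hφF f hf, two_zsmul, add_eq_left] at hfix
  exact hCtop ((map_eq_top_iff AddSubgroup.toIntSubmodule).mp (eq_top_of_isCompl_bot (hFbot ▸ hCF)))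

/-- In a rigid Z-group `G` with `D = ⋂_{n>0} nG`, there is no proper convex
subgroup `C` containing `1` with `C + D = G`. -/
theorem no_proper_convex_complement (G : Type*) [AddCommGroup G] [LinearOrder G] [IsOrderedAddMonoid G] (one : G)
    (hpos : 0 < one) (hleast : ∀ x : G, 0 < x → one ≤ x)
    (hdiv : ∀ g : G, ∀ n : ℤ, 0 < n → ∃ h : G, ∃ k : ℤ, g = n • h + k • one)
    (hrig : ∀ f : G ≃+ G, Monotone f → f one = one → ∀ x : G, f x = x)
    (D : Set G) (hD : D = {g : G | ∀ n : ℤ, 0 < n → ∃ h : G, g = n • h}) :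
    ¬ ∃ C : AddSubgroup G,
        (∀ x y : G, -y ≤ x → x ≤ y → y ∈ C → x ∈ C) ∧
        one ∈ C ∧ C ≠ ⊤ ∧
        (∀ g : G, ∃ c ∈ C, ∃ d ∈ D, g = c + d) :=
  no_proper_convex_complement_general G one hrig D hD
end

section
/- Let G be a rigid Z-group and let D = ⋂_{n>0} nG. If C is a convex subgroup of G with 1 ∈ C and C ∩ D ≠ {0}, then C + D = G. -/
/-!
Suppose `g ∉ K := C + D`. Convex subgroups are pure and `D` is divisible, so `K` is pure and
`n ↦ n • g` embeds `ℤ` into `G ⧸ K`. The subgroup `C ∩ D` is again divisible, hence an injective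
`ℤ`-module, so there is `φ : G →+ C ∩ D` vanishing on `K` with `φ g = d ≠ 0`. Then `x ↦ x + φ x`
is an automorphism fixing `1`, and it is monotone because a positive element outside the convex
subgroup `C` exceeds every element of `C`. It moves `g`, contradicting rigidity.
-/

namespace AddSubgroup

section Divisible

variable {G : Type*} [AddCommGroup G]

def IsDivisible (H : AddSubgroup G) : Prop :=
  ∀ n : ℕ, n ≠ 0 → ∀ x ∈ H, ∃ y ∈ H, n • y = x

theorem IsDivisible.baer {H : AddSubgroup G} (hH : H.IsDivisible) : Module.Baer ℤ H := by
  let : DivisibleBy H ℕ := divisibleByOfSMulRightSurj H ℕ fun {n} hn x => by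
    obtain ⟨y, hy, hyx⟩ := hH n hn x x.2
    exact ⟨⟨y, hy⟩, Subtype.ext hyx⟩
  let := AddGroup.divisibleByIntOfDivisibleByNat H
  exact Module.Baer.of_divisible H

variable {C D : AddSubgroup G}

theorem IsDivisible.nsmulSaturated_sup (hD : D.IsDivisible) (hC : C.NSMulSaturated) :
    (C ⊔ D).NSMulSaturated := by
  intro n x hx
  obtain ⟨c, hc, d, hd, hcd⟩ := mem_sup.1 hx
  rcases eq_or_ne n 0 with hn | hn
  · exact .inl hn
  obtain ⟨e, he, rfl⟩ := hD n hn d hd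
  have hxe : n • (x - e) ∈ C := by rwa [nsmul_sub, ← hcd, add_sub_cancel_right]
  exact .inr (mem_sup.2 ⟨x - e, (hC hxe).resolve_left hn, e, he, sub_add_cancel x e⟩)

theorem IsDivisible.inf_of_nsmulSaturated (hD : D.IsDivisible) (hC : C.NSMulSaturated) :
    (C ⊓ D).IsDivisible := by
  intro n hn x ⟨hxC, hxD⟩
  obtain ⟨y, hyD, rfl⟩ := hD n hn x hxD
  exact ⟨y, ⟨(hC hxC).resolve_left hn, hyD⟩, rfl⟩

end Divisible

section Convex

variable {G : Type*} [AddCommGroup G] [LinearOrder G] [IsOrderedAddMonoid G]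

def IsConvex_s10 (C : AddSubgroup G) : Prop :=
  ∀ x y : G, -y ≤ x → x ≤ y → y ∈ C → x ∈ C

variable {C : AddSubgroup G}

theorem IsConvex_s10.mem_of_abs_le (hC : C.IsConvex_s10) {x y : G} (hxy : |x| ≤ |y|) (hy : y ∈ C) :
    x ∈ C :=
  hC x |y| (neg_le.1 ((neg_le_abs x).trans hxy)) ((le_abs_self x).trans hxy)
    (abs_by_cases (· ∈ C) hy (neg_mem hy))

theorem IsConvex_s10.nsmulSaturated (hC : C.IsConvex_s10) : C.NSMulSaturated := by
  intro n x hx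
  refine or_iff_not_imp_left.2 fun hn => hC.mem_of_abs_le ?_ hx
  rw [abs_nsmul]
  exact le_self_nsmul (abs_nonneg x) hn

theorem IsConvex_s10.lt_of_notMem (hC : C.IsConvex_s10) {x c : G} (hx : 0 ≤ x) (hxC : x ∉ C)
    (hc : c ∈ C) : c < x :=
  lt_of_not_ge fun hxc => hxC <| hC.mem_of_abs_le
    (by rw [abs_of_nonneg hx]; exact hxc.trans (le_abs_self c)) hc

end Convex

end AddSubgroup

namespace AddCommGroup

variable (G : Type*) [AddCommGroup G]

def infinitelyDivisible : AddSubgroup G where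
  carrier := {g : G | ∀ n : ℤ, 0 < n → ∃ h : G, g = n • h}
  zero_mem' n _ := ⟨0, (zsmul_zero n).symm⟩
  add_mem' {x y} hx hy n hn := by
    obtain ⟨a, rfl⟩ := hx n hn
    obtain ⟨b, rfl⟩ := hy n hn
    exact ⟨a + b, (zsmul_add a b n).symm⟩
  neg_mem' {x} hx n hn := by
    obtain ⟨a, rfl⟩ := hx n hn
    exact ⟨-a, (zsmul_neg a n).symm⟩

theorem isDivisible_infinitelyDivisible [IsAddTorsionFree G] :
    (infinitelyDivisible G).IsDivisible := by
  intro n hn x hx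
  have hn' : (0 : ℤ) < n := by omega
  obtain ⟨y, rfl⟩ := hx n hn'
  refine ⟨y, fun m hm => ?_, (natCast_zsmul y n).symm⟩
  obtain ⟨z, hz⟩ := hx (n * m) (mul_pos hn' hm)
  exact ⟨z, zsmul_right_injective hn'.ne' (by simp only [hz, mul_zsmul])⟩

end AddCommGroup

theorem AddSubmonoid.NSMulSaturated.exists_addMonoidHom_eq_zero_of_notMem {G E : Type*}
    [AddCommGroup G] [AddCommGroup E] (hE : Module.Baer ℤ E) {K : AddSubgroup G}
    (hK : K.NSMulSaturated) {g : G} (hg : g ∉ K) (e : E) :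
    ∃ φ : G →+ E, (∀ k ∈ K, φ k = 0) ∧ φ g = e := by
  have hinj : Function.Injective (zmultiplesHom (G ⧸ K) g) := by
    refine (injective_iff_map_eq_zero _).2 fun n hn => ?_
    rw [zmultiplesHom_apply, ← QuotientAddGroup.mk_zsmul, QuotientAddGroup.eq_zero_iff] at hn
    exact (AddSubgroup.saturated_iff_zsmul.1 hK n g hn).resolve_right hg
  obtain ⟨ψ, hψ⟩ := hE.extension_property_addMonoidHom _ hinj (zmultiplesHom E e)
  refine ⟨ψ.comp (QuotientAddGroup.mk' K), fun k hk => ?_, ?_⟩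
  · simp [(QuotientAddGroup.eq_zero_iff k).2 hk]
  · simpa using DFunLike.congr_fun hψ 1

section Shear

variable {G : Type*} [AddCommGroup G]

def AddMonoidHom.shearEquiv (φ : G →+ G) (hφ : ∀ x, φ (φ x) = 0) : G ≃+ G where
  toFun x := x + φ x
  invFun x := x - φ x
  left_inv x := by simp [hφ]
  right_inv x := by simp [hφ]
  map_add' x y := by simp only [map_add]; abel

@[simp]
theorem AddMonoidHom.shearEquiv_apply (φ : G →+ G) (hφ : ∀ x, φ (φ x) = 0) (x : G) :
    φ.shearEquiv hφ x = x + φ x :=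
  rfl

end Shear

namespace AddSubgroup

variable {G : Type*} [AddCommGroup G] [LinearOrder G] [IsOrderedAddMonoid G] {C : AddSubgroup G}

theorem IsConvex_s10.monotone_add_self (hC : C.IsConvex_s10) {φ : G →+ G} (hφC : ∀ x, φ x ∈ C)
    (hφ : ∀ c ∈ C, φ c = 0) : Monotone fun x => x + φ x := by
  intro a b hab
  have hsub : (b + φ b) - (a + φ a) = (b - a) + φ (b - a) := by rw [map_sub]; abel
  rw [← sub_nonneg, hsub]
  by_cases hbaC : b - a ∈ C
  · rw [hφ _ hbaC, add_zero, sub_nonneg]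
    exact hab
  · have := hC.lt_of_notMem (sub_nonneg.2 hab) hbaC (neg_mem (hφC (b - a)))
    exact (neg_lt_iff_pos_add.1 this).le

theorem IsConvex_s10.eq_top_of_rigid {one : G}
    (hrig : ∀ f : G ≃+ G, Monotone f → f one = one → ∀ x : G, f x = x)
    (hC : C.IsConvex_s10) (hone : one ∈ C) {K : AddSubgroup G} (hCK : C ≤ K)
    (hK : K.NSMulSaturated) {E : AddSubgroup G} (hEC : E ≤ C) (hE : E.IsDivisible)
    (hE0 : E ≠ ⊥) : K = ⊤ := by
  refine eq_top_iff.2 fun g _ => by_contra fun hg => ?_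
  obtain ⟨e, he0⟩ := ne_bot_iff_exists_ne_zero.1 hE0
  obtain ⟨φ, hφK, hφg⟩ := hK.exists_addMonoidHom_eq_zero_of_notMem hE.baer hg e
  let ψ := E.subtype.comp φ
  have hψC : ∀ x, ψ x ∈ C := fun x => hEC (φ x).2
  have hψ : ∀ c ∈ C, ψ c = 0 := fun c hc => by simp [ψ, hφK c (hCK hc)]
  have hfg := hrig (ψ.shearEquiv fun x => hψ _ (hψC x)) (hC.monotone_add_self hψC hψ)
    (by simp [hψ one hone]) g
  rw [AddMonoidHom.shearEquiv_apply, add_eq_left] at hfg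
  exact he0 (hφg ▸ Subtype.ext hfg)

end AddSubgroup

theorem convex_meeting_D_is_everything_general (G : Type*) [AddCommGroup G] [LinearOrder G] [IsOrderedAddMonoid G] (one : G)
    (hrig : ∀ f : G ≃+ G, Monotone f → f one = one → ∀ x : G, f x = x)
    (D : Set G) (hD : D = {g : G | ∀ n : ℤ, 0 < n → ∃ h : G, g = n • h})
    (C : AddSubgroup G)
    (hconv : ∀ x y : G, -y ≤ x → x ≤ y → y ∈ C → x ∈ C)
    (honeC : one ∈ C)
    (hmeet : ∃ d ∈ D, d ∈ C ∧ d ≠ 0) :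
    ∀ g : G, ∃ c ∈ C, ∃ d ∈ D, g = c + d := by
  subst hD
  have hC : C.IsConvex_s10 := hconv
  have hD := AddCommGroup.isDivisible_infinitelyDivisible G
  obtain ⟨d, hdD, hdC, hd0⟩ := hmeet
  have hCD : C ⊔ AddCommGroup.infinitelyDivisible G = ⊤ :=
    hC.eq_top_of_rigid hrig honeC le_sup_left (hD.nsmulSaturated_sup hC.nsmulSaturated)
      inf_le_left (hD.inf_of_nsmulSaturated hC.nsmulSaturated)
      (AddSubgroup.ne_bot_iff_exists_ne_zero.2 ⟨⟨d, hdC, hdD⟩, fun h => hd0 (congrArg Subtype.val h)⟩)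
  intro g
  obtain ⟨c, hc, d, hd, rfl⟩ := AddSubgroup.mem_sup.1 (hCD ▸ AddSubgroup.mem_top g)
  exact ⟨c, hc, d, hd, rfl⟩

/-- In a rigid Z-group `G` with `D = ⋂_{n>0} nG`, any convex subgroup `C`
containing `1` that intersects `D` nontrivially satisfies `C + D = G`. -/
theorem convex_meeting_D_is_everything (G : Type*) [AddCommGroup G] [LinearOrder G] [IsOrderedAddMonoid G] (one : G)
    (hpos : 0 < one) (hleast : ∀ x : G, 0 < x → one ≤ x)
    (hdiv : ∀ g : G, ∀ n : ℤ, 0 < n → ∃ h : G, ∃ k : ℤ, g = n • h + k • one)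
    (hrig : ∀ f : G ≃+ G, Monotone f → f one = one → ∀ x : G, f x = x)
    (D : Set G) (hD : D = {g : G | ∀ n : ℤ, 0 < n → ∃ h : G, g = n • h})
    (C : AddSubgroup G)
    (hconv : ∀ x y : G, -y ≤ x → x ≤ y → y ∈ C → x ∈ C)
    (honeC : one ∈ C)
    (hmeet : ∃ d ∈ D, d ∈ C ∧ d ≠ 0) :
    ∀ g : G, ∃ c ∈ C, ∃ d ∈ D, g = c + d :=
  convex_meeting_D_is_everything_general G one hrig D hD C hconv honeC hmeet
end

section
/- Let D'' and L'' be nonzero ℚ-linear subspaces of ℝ with D'' ∩ L'' = {0}. Assume that D'' is finite-dimensional over ℚ, or that the ℚ-dimension of D'' is strictly less than the ℚ-dimension of L''. Then for every real number γ > 0 such that {γ·d : d ∈ D''} = D'' and (γ − 1)·l ∈ D'' for all l ∈ L'', one has γ = 1. -/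
/-!
If `γ ≠ 1`, multiplication by `c = γ - 1` is an injective `ℚ`-linear map. It embeds `L''` into
`D''`, so `dim L'' ≤ dim D''` and `D''` must be finite-dimensional; it also maps `D''` into itself
(as `γ D'' = D''`), hence onto `D''`. Then for `0 ≠ l ∈ L''` the element `c l ∈ D''` is `c d` for
some `d ∈ D''`, so `l = d ∈ D'' ∩ L'' = 0`.
-/

namespace Submodule

variable {K A : Type*} [Ring A]

section Image

variable [Ring K] [Module K A]

theorem mul_mem_of_image_mul_eq {D : Submodule K A} {γ x : A}
    (hγD : (fun y : A => γ * y) '' (D : Set A) = D) (hx : x ∈ D) : γ * x ∈ D := by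
  rw [← SetLike.mem_coe, ← hγD]
  exact ⟨x, hx, rfl⟩

theorem sub_one_mul_mem_of_image_mul_eq {D : Submodule K A} {γ x : A}
    (hγD : (fun y : A => γ * y) '' (D : Set A) = D) (hx : x ∈ D) : (γ - 1) * x ∈ D := by
  rw [sub_one_mul]
  exact sub_mem (mul_mem_of_image_mul_eq hγD hx) hx

end Image

variable [Field K] [Algebra K A] [NoZeroDivisors A]

theorem injective_restrict_mulLeft {L D : Submodule K A} {c : A} (hc : c ≠ 0)
    (hLD : ∀ x ∈ L, LinearMap.mulLeft K c x ∈ D) :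
    Function.Injective ((LinearMap.mulLeft K c).restrict hLD) :=
  fun _ _ h => Subtype.ext (mul_left_cancel₀ hc (congrArg Subtype.val h))

theorem rank_le_of_mul_mem {L D : Submodule K A} {c : A} (hc : c ≠ 0)
    (hLD : ∀ x ∈ L, c * x ∈ D) : Module.rank K L ≤ Module.rank K D :=
  LinearMap.rank_le_of_injective _ (injective_restrict_mulLeft hc hLD)

theorem mem_of_mul_mem_of_finiteDimensional {D : Submodule K A} [FiniteDimensional K D] {c y : A}
    (hc : c ≠ 0) (hDD : ∀ x ∈ D, c * x ∈ D) (hy : c * y ∈ D) : y ∈ D := by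
  obtain ⟨d, hd⟩ := LinearMap.injective_iff_surjective.mp (injective_restrict_mulLeft hc hDD)
    ⟨c * y, hy⟩
  have hdy : (d : A) = y := mul_left_cancel₀ hc (congrArg Subtype.val hd)
  exact hdy ▸ d.2

end Submodule

open Submodule in
theorem multiplier_criterion_of_dim_general (D'' L'' : Submodule ℚ ℝ)
    (hL : L'' ≠ ⊥) (hDL : D'' ⊓ L'' = ⊥)
    (hdim : FiniteDimensional ℚ D'' ∨ Module.rank ℚ D'' < Module.rank ℚ L'') :
    ∀ γ : ℝ, 0 < γ →
      (fun x : ℝ => γ * x) '' (D'' : Set ℝ) = (D'' : Set ℝ) →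
      (∀ l ∈ L'', (γ - 1) * l ∈ D'') →
      γ = 1 := by
  intro γ _ hγD hγL
  by_contra hne
  have hc : γ - 1 ≠ 0 := sub_ne_zero.mpr hne
  have : FiniteDimensional ℚ D'' :=
    hdim.resolve_right (rank_le_of_mul_mem hc hγL).not_gt
  obtain ⟨l, hlL, hl0⟩ := exists_mem_ne_zero_of_ne_bot hL
  have hlD : l ∈ D'' :=
    mem_of_mul_mem_of_finiteDimensional hc (fun x hx => sub_one_mul_mem_of_image_mul_eq hγD hx)
      (hγL l hlL)
  exact hl0 ((mem_bot ℚ).mp (hDL ▸ mem_inf.mpr ⟨hlD, hlL⟩))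

/-- Sufficient condition (dimension comparison) for the multiplier criterion:
if `D''` is finite-dimensional over `ℚ`, or `dim_ℚ D'' < dim_ℚ L''`, then the only
`γ > 0` with `γ·D'' = D''` and `(γ−1)·L'' ⊆ D''` is `γ = 1`. -/
theorem multiplier_criterion_of_dim (D'' L'' : Submodule ℚ ℝ)
    (hD : D'' ≠ ⊥) (hL : L'' ≠ ⊥) (hDL : D'' ⊓ L'' = ⊥)
    (hdim : FiniteDimensional ℚ D'' ∨ Module.rank ℚ D'' < Module.rank ℚ L'') :
    ∀ γ : ℝ, 0 < γ →
      (fun x : ℝ => γ * x) '' (D'' : Set ℝ) = (D'' : Set ℝ) →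
      (∀ l ∈ L'', (γ - 1) * l ∈ D'') →
      γ = 1 :=
  multiplier_criterion_of_dim_general D'' L'' hL hDL hdim
end

section
/- Let D'' and L'' be nonzero ℚ-linear subspaces of ℝ with D'' ∩ L'' = {0}. Assume that there is no real number α of the form a/b with a, b ∈ D'' and b ≠ 0 such that L'' + D'' ⊆ {α·d : d ∈ D''}. Then for every real number γ > 0 such that {γ·d : d ∈ D''} = D'' and (γ − 1)·l ∈ D'' for all l ∈ L'', one has γ = 1. -/
/-! If `γ ≠ 1`, then `c = γ - 1` is a nonzero multiplier sending both `D''` and `L''` into `D''`,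
so `L'' + D'' ⊆ c⁻¹ · D''`; and `c⁻¹ = d₀ / (c d₀)` for any nonzero `d₀ ∈ D''` is a ratio of
elements of `D''`, which the hypothesis forbids. -/

section

variable {k K : Type*} [Field K] [Ring k] [Module k K] {D L : Submodule k K}

theorem Submodule.sub_one_mul_mem_of_mul_mem {γ : K} (hγ : ∀ d ∈ D, γ * d ∈ D) {d : K}
    (hd : d ∈ D) : (γ - 1) * d ∈ D := by
  simpa only [sub_one_mul] using D.sub_mem (hγ d hd) hd

theorem Submodule.exists_ratio_add_subset_mul_of_mul_mem (hD : D ≠ ⊥) {c : K} (hc : c ≠ 0)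
    (hcD : ∀ d ∈ D, c * d ∈ D) (hcL : ∀ l ∈ L, c * l ∈ D) :
    ∃ a ∈ D, ∃ b ∈ D, b ≠ 0 ∧
      ∀ x : K, (∃ l ∈ L, ∃ d ∈ D, x = l + d) → ∃ d ∈ D, x = (a / b) * d := by
  obtain ⟨d₀, hd₀, hd₀_ne⟩ := Submodule.exists_mem_ne_zero_of_ne_bot hD
  refine ⟨d₀, hd₀, c * d₀, hcD d₀ hd₀, mul_ne_zero hc hd₀_ne, ?_⟩
  rintro x ⟨l, hl, d, hd, rfl⟩
  refine ⟨c * (l + d), mul_add c l d ▸ D.add_mem (hcL l hl) (hcD d hd), ?_⟩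
  field_simp

end

theorem multiplier_criterion_of_no_ratio_general (D'' L'' : Submodule ℚ ℝ)
    (hD : D'' ≠ ⊥)
    (hno : ¬ ∃ a ∈ D'', ∃ b ∈ D'', b ≠ 0 ∧
      ∀ x : ℝ, (∃ l ∈ L'', ∃ d ∈ D'', x = l + d) → ∃ d ∈ D'', x = (a / b) * d) :
    ∀ γ : ℝ, 0 < γ →
      (fun x : ℝ => γ * x) '' (D'' : Set ℝ) = (D'' : Set ℝ) →
      (∀ l ∈ L'', (γ - 1) * l ∈ D'') →
      γ = 1 := by
  intro γ _ hγD hγL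
  by_contra hγ_ne
  have hγ_mul : ∀ d ∈ D'', γ * d ∈ D'' := fun d hd => hγD.subset ⟨d, hd, rfl⟩
  exact hno <| D''.exists_ratio_add_subset_mul_of_mul_mem hD (sub_ne_zero.mpr hγ_ne)
    (fun _ hd => D''.sub_one_mul_mem_of_mul_mem hγ_mul hd) hγL

/-- Sufficient condition for the multiplier criterion: if there is no `α = a/b`
with `a, b ∈ D''`, `b ≠ 0`, such that `L'' + D'' ⊆ α·D''`, then the only `γ > 0`
with `γ·D'' = D''` and `(γ−1)·L'' ⊆ D''` is `γ = 1`. -/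
theorem multiplier_criterion_of_no_ratio (D'' L'' : Submodule ℚ ℝ)
    (hD : D'' ≠ ⊥) (hL : L'' ≠ ⊥) (hDL : D'' ⊓ L'' = ⊥)
    (hno : ¬ ∃ a ∈ D'', ∃ b ∈ D'', b ≠ 0 ∧
      ∀ x : ℝ, (∃ l ∈ L'', ∃ d ∈ D'', x = l + d) → ∃ d ∈ D'', x = (a / b) * d) :
    ∀ γ : ℝ, 0 < γ →
      (fun x : ℝ => γ * x) '' (D'' : Set ℝ) = (D'' : Set ℝ) →
      (∀ l ∈ L'', (γ - 1) * l ∈ D'') →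
      γ = 1 :=
  multiplier_criterion_of_no_ratio_general D'' L'' hD hno
end

section
/- Let D'' and L'' be nonzero ℚ-linear subspaces of ℝ with D'' ∩ L'' = {0}. Assume that there exists a subfield K of ℝ with D'' ⊆ K ⊆ L'' + D''. Then for every real number γ > 0 such that {γ·d : d ∈ D''} = D'' and (γ − 1)·l ∈ D'' for all l ∈ L'', one has γ = 1. -/
/-!
If `γ ≠ 1`, then `γ = (γ d₀) / d₀` lies in `K`, and multiplication by `γ - 1` maps `L'' + D''`,
hence `K`, into `D''`. Dividing by `γ - 1 ∈ K` shows `K ⊆ D''`; but `K` also contains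
`l = (γ - 1) l / (γ - 1)` for every `l ∈ L''`, so a nonzero `l ∈ L''` would lie in `D'' ∩ L''`.
-/

theorem Subfield.mem_of_mul_mem {E : Type*} [Field E] (K : Subfield E) {c x : E}
    (hc : c ∈ K) (hc0 : c ≠ 0) (hcx : c * x ∈ K) : x ∈ K := by
  simpa [hc0] using K.mul_mem (K.inv_mem hc) hcx

theorem Subfield.coe_subset_of_mul_mem {E : Type*} [Field E] (K : Subfield E) {D : Set E}
    {c : E} (hc : c ∈ K) (hc0 : c ≠ 0) (hKD : ∀ x ∈ K, c * x ∈ D) : (K : Set E) ⊆ D :=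
  fun x hx => by simpa [mul_div_cancel₀ _ hc0] using hKD _ (K.div_mem hx hc)

theorem sub_one_mul_mem_of_mem_add {E S : Type*} [Ring E] [SetLike S E] [AddSubgroupClass S E]
    {D : S} {L : Set E} {γ x : E} (hγD : ∀ d ∈ D, γ * d ∈ D) (hγL : ∀ l ∈ L, (γ - 1) * l ∈ D)
    (hx : ∃ l ∈ L, ∃ d ∈ D, x = l + d) : (γ - 1) * x ∈ D := by
  obtain ⟨l, hl, d, hd, rfl⟩ := hx
  rw [mul_add]
  exact add_mem (hγL l hl) (sub_one_mul γ d ▸ sub_mem (hγD d hd) hd)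

/-- Sufficient condition for the multiplier criterion: if there is a subfield `K`
of `ℝ` with `D'' ⊆ K ⊆ L'' + D''`, then the only `γ > 0` with `γ·D'' = D''` and
`(γ−1)·L'' ⊆ D''` is `γ = 1`. -/
theorem multiplier_criterion_of_subfield (D'' L'' : Submodule ℚ ℝ)
    (hD : D'' ≠ ⊥) (hL : L'' ≠ ⊥) (hDL : D'' ⊓ L'' = ⊥)
    (hK : ∃ K : Subfield ℝ, (D'' : Set ℝ) ⊆ (K : Set ℝ) ∧
      (K : Set ℝ) ⊆ {x : ℝ | ∃ l ∈ L'', ∃ d ∈ D'', x = l + d}) :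
    ∀ γ : ℝ, 0 < γ →
      (fun x : ℝ => γ * x) '' (D'' : Set ℝ) = (D'' : Set ℝ) →
      (∀ l ∈ L'', (γ - 1) * l ∈ D'') →
      γ = 1 := by
  obtain ⟨K, hDK, hKLD⟩ := hK
  intro γ _ himg hγL
  by_contra hγ
  have hγD : ∀ d ∈ D'', γ * d ∈ D'' := fun d hd => himg.subset ⟨d, hd, rfl⟩
  obtain ⟨d₀, hd₀, hd₀0⟩ := (Submodule.ne_bot_iff D'').mp hD
  have hγK : γ ∈ K := K.mem_of_mul_mem (hDK hd₀) hd₀0 (mul_comm γ d₀ ▸ hDK (hγD d₀ hd₀))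
  have hcK : γ - 1 ∈ K := K.sub_mem hγK K.one_mem
  have hc0 : γ - 1 ≠ 0 := sub_ne_zero.mpr hγ
  have hKD : (K : Set ℝ) ⊆ D'' :=
    K.coe_subset_of_mul_mem hcK hc0 fun x hx => sub_one_mul_mem_of_mem_add hγD hγL (hKLD hx)
  obtain ⟨l, hl, hl0⟩ := (Submodule.ne_bot_iff L'').mp hL
  have hlK : l ∈ K := K.mem_of_mul_mem hcK hc0 (hDK (hγL l hl))
  exact hl0 (Submodule.disjoint_def.mp (disjoint_iff.mpr hDL) l (hKD hlK) hl)
end
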